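/- arXiv:1712.08389 — 5 statements merged into one kernel-verified Lean document; each statement's English description precedes it below -/
import Mathlib

section
/- Let (E,F) be a matroid, A₁, A₂ ⊆ E, and for i=1,2 let Iᵢ ⊆ Aᵢ be a maximal independent subset of Aᵢ. If I₁ ∪ I₂ is independent, then I₁ ∩ I₂ is a maximal independent subset of A₁ ∩ A₂. -/
/-- A matroid in the sense of the paper. -/
structure PaperMatroid (α : Type*) [DecidableEq α] [Fintype α] where
  Indep : Finset α → Prop
  nonempty : ∃ I, Indep I
  subset_closed : ∀ ⦃I J : Finset α⦄, Indep I → J ⊆ I → Indep J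
  max_card_eq : ∀ (A I₁ I₂ : Finset α),
    I₁ ⊆ A → Indep I₁ → (∀ J, J ⊆ A → Indep J → I₁ ⊆ J → J = I₁) →
    I₂ ⊆ A → Indep I₂ → (∀ J, J ⊆ A → Indep J → I₂ ⊆ J → J = I₂) →
    I₁.card = I₂.card

/-- `I` is a maximal independent subset of `A`. -/
def PaperMatroid.MaxIndepIn {α : Type*} [DecidableEq α] [Fintype α]
    (M : PaperMatroid α) (A I : Finset α) : Prop :=
  I ⊆ A ∧ M.Indep I ∧ ∀ J, J ⊆ A → M.Indep J → I ⊆ J → J = I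

/-- If `Iᵢ` is a maximal independent subset of `Aᵢ` (i = 1,2) and `I₁ ∪ I₂` is
independent, then `I₁ ∩ I₂` is a maximal independent subset of `A₁ ∩ A₂`. -/
theorem inter_maxIndep {α : Type*} [DecidableEq α] [Fintype α] (M : PaperMatroid α)
    (A₁ A₂ I₁ I₂ : Finset α)
    (h₁ : M.MaxIndepIn A₁ I₁) (h₂ : M.MaxIndepIn A₂ I₂)
    (hu : M.Indep (I₁ ∪ I₂)) :
    M.MaxIndepIn (A₁ ∩ A₂) (I₁ ∩ I₂) := by
  classical
  obtain ⟨hI₁A, hI₁, hmax₁⟩ := h₁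
  obtain ⟨hI₂A, hI₂, hmax₂⟩ := h₂
  -- I₂ ∩ A₁ ⊆ I₁
  have key₁ : I₂ ∩ A₁ ⊆ I₁ := by
    have h := hmax₁ (I₁ ∪ (I₂ ∩ A₁))
      (Finset.union_subset hI₁A (Finset.inter_subset_right))
      (M.subset_closed hu (Finset.union_subset_union_right Finset.inter_subset_left))
      Finset.subset_union_left
    intro x hx
    have : x ∈ I₁ ∪ (I₂ ∩ A₁) := Finset.mem_union_right _ hx
    rwa [h] at this
  have key₂ : I₁ ∩ A₂ ⊆ I₂ := by
    have h := hmax₂ (I₂ ∪ (I₁ ∩ A₂))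
      (Finset.union_subset hI₂A (Finset.inter_subset_right))
      (M.subset_closed hu (Finset.union_subset (Finset.subset_union_right)
        (Finset.inter_subset_left.trans Finset.subset_union_left)))
      Finset.subset_union_left
    intro x hx
    have : x ∈ I₂ ∪ (I₁ ∩ A₂) := Finset.mem_union_right _ hx
    rwa [h] at this
  refine ⟨Finset.inter_subset_inter hI₁A hI₂A,
    M.subset_closed hu (Finset.inter_subset_left.trans Finset.subset_union_left), ?_⟩
  intro J hJA hJ hIJ
  refine Finset.Subset.antisymm ?_ hIJ
  intro x hxJ
  by_contra hx
  have hxA₁ : x ∈ A₁ := (Finset.mem_inter.mp (hJA hxJ)).1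
  have hxA₂ : x ∈ A₂ := (Finset.mem_inter.mp (hJA hxJ)).2
  have hxI₁ : x ∉ I₁ := fun h => hx (Finset.mem_inter.mpr ⟨h, key₂ (Finset.mem_inter.mpr ⟨h, hxA₂⟩)⟩)
  have hxI₂ : x ∉ I₂ := fun h => hx (Finset.mem_inter.mpr ⟨key₁ (Finset.mem_inter.mpr ⟨h, hxA₁⟩), h⟩)
  -- I₁ ∪ {x} and I₂ ∪ {x} are dependent
  have dep₁ : ¬ M.Indep (insert x I₁) := by
    intro h
    have := hmax₁ (insert x I₁) (Finset.insert_subset hxA₁ hI₁A) h (Finset.subset_insert _ _)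
    exact hxI₁ (this ▸ Finset.mem_insert_self x I₁)
  have dep₂ : ¬ M.Indep (insert x I₂) := by
    intro h
    have := hmax₂ (insert x I₂) (Finset.insert_subset hxA₂ hI₂A) h (Finset.subset_insert _ _)
    exact hxI₂ (this ▸ Finset.mem_insert_self x I₂)
  -- Work inside S = insert x (I₁ ∪ I₂)
  set S : Finset α := insert x (I₁ ∪ I₂) with hS
  -- I₁ ∪ I₂ is maximal independent in S
  have maxU : ∀ K, K ⊆ S → M.Indep K → I₁ ∪ I₂ ⊆ K → K = I₁ ∪ I₂ := by
    intro K hKS hK hUK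
    by_cases hxK : x ∈ K
    · exfalso
      apply dep₁
      exact M.subset_closed hK (Finset.insert_subset hxK (Finset.subset_union_left.trans hUK))
    · refine Finset.Subset.antisymm ?_ hUK
      intro y hy
      rcases Finset.mem_insert.mp (hKS hy) with rfl | h
      · exact absurd hy hxK
      · exact h
  -- Extend (I₁ ∩ I₂) ∪ {x} (indep, being ⊆ J) to a maximal independent subset of S
  have hstart : M.Indep (insert x (I₁ ∩ I₂)) :=
    M.subset_closed hJ (Finset.insert_subset hxJ hIJ)
  have hstartS : insert x (I₁ ∩ I₂) ⊆ S :=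
    Finset.insert_subset_insert _ (Finset.inter_subset_left.trans Finset.subset_union_left)
  -- find a maximum-cardinality independent superset within S
  obtain ⟨B, hB, hBmax⟩ : ∃ B ∈ (S.powerset.filter
      (fun K => M.Indep K ∧ insert x (I₁ ∩ I₂) ⊆ K)),
      ∀ K ∈ (S.powerset.filter (fun K => M.Indep K ∧ insert x (I₁ ∩ I₂) ⊆ K)),
        K.card ≤ B.card := by
    apply Finset.exists_max_image
    exact ⟨insert x (I₁ ∩ I₂), Finset.mem_filter.mpr
      ⟨Finset.mem_powerset.mpr hstartS, hstart, Finset.Subset.refl _⟩⟩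
  rw [Finset.mem_filter, Finset.mem_powerset] at hB
  obtain ⟨hBS, hBindep, hBstart⟩ := hB
  have hBmax' : ∀ K, K ⊆ S → M.Indep K → B ⊆ K → K = B := by
    intro K hKS hK hBK
    have hle : K.card ≤ B.card := hBmax K (Finset.mem_filter.mpr
      ⟨Finset.mem_powerset.mpr hKS, hK, hBstart.trans hBK⟩)
    exact (Finset.eq_of_subset_of_card_le hBK hle).symm
  -- cardinality of B equals that of I₁ ∪ I₂
  have hcard : B.card = (I₁ ∪ I₂).card :=
    M.max_card_eq S B (I₁ ∪ I₂) hBS hBindep hBmax'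
      (Finset.subset_insert _ _) hu maxU
  have hxB : x ∈ B := hBstart (Finset.mem_insert_self _ _)
  -- B misses exactly one element y of I₁ ∪ I₂
  have hBx : B.erase x ⊆ I₁ ∪ I₂ := by
    intro y hy
    rcases Finset.mem_insert.mp (hBS (Finset.mem_of_mem_erase hy)) with rfl | h
    · exact absurd rfl (Finset.ne_of_mem_erase hy)
    · exact h
  have hcard' : (B.erase x).card = (I₁ ∪ I₂).card - 1 := by
    rw [Finset.card_erase_of_mem hxB, hcard]
  have hUnonempty : 0 < (I₁ ∪ I₂).card := by
    rw [← hcard]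
    exact Finset.card_pos.mpr ⟨x, hxB⟩
  obtain ⟨y, hyU, hyB⟩ : ∃ y ∈ I₁ ∪ I₂, y ∉ B.erase x := by
    by_contra h
    push_neg at h
    have : I₁ ∪ I₂ ⊆ B.erase x := h
    have := Finset.card_le_card this
    omega
  have hrest : (I₁ ∪ I₂) \ {y} ⊆ B := by
    have hsub : B.erase x ⊆ (I₁ ∪ I₂).erase y := by
      intro z hz
      refine Finset.mem_erase.mpr ⟨?_, hBx hz⟩
      rintro rfl; exact hyB hz
    have hcardle : ((I₁ ∪ I₂).erase y).card ≤ (B.erase x).card := by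
      rw [Finset.card_erase_of_mem hyU, hcard']
    have heq := Finset.eq_of_subset_of_card_le hsub hcardle
    intro z hz
    rw [Finset.sdiff_singleton_eq_erase] at hz
    rw [← heq] at hz
    exact Finset.mem_of_mem_erase hz
  have hyI : y ∉ I₁ ∩ I₂ := by
    intro h
    have : y ∈ B := hBstart (Finset.mem_insert_of_mem h)
    have : y ∈ B.erase x := Finset.mem_erase.mpr ⟨by rintro rfl; exact hxI₁ (Finset.mem_inter.mp h).1, this⟩
    exact hyB this
  rcases Finset.mem_union.mp hyU with hyI₁ | hyI₂
  · -- y ∈ I₁, y ∉ I₂, so I₂ ⊆ B, hence insert x I₂ ⊆ B, contradicting dep₂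
    have hyI₂ : y ∉ I₂ := fun h => hyI (Finset.mem_inter.mpr ⟨hyI₁, h⟩)
    apply dep₂
    apply M.subset_closed hBindep
    refine Finset.insert_subset hxB ?_
    intro z hz
    exact hrest (Finset.mem_sdiff.mpr ⟨Finset.mem_union_right _ hz,
      by simp; rintro rfl; exact hyI₂ hz⟩)
  · have hyI₁ : y ∉ I₁ := fun h => hyI (Finset.mem_inter.mpr ⟨h, hyI₂⟩)
    apply dep₁
    apply M.subset_closed hBindep
    refine Finset.insert_subset hxB ?_
    intro z hz
    exact hrest (Finset.mem_sdiff.mpr ⟨Finset.mem_union_left _ hz,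
      by simp; rintro rfl; exact hyI₁ hz⟩)
end

section
/- (Matroid partition theorem of Edmonds) Let (E,Fᵢ), i=1,...,m, be matroids on the same finite set E with rank functions rᵢ. If every subset A ⊆ E satisfies |A| ≤ Σᵢ rᵢ(A), then E can be partitioned into sets I₁,...,I_m with Iᵢ ∈ Fᵢ. -/
/-!
Induction on `|E|`, following Edmonds. Call `A` tight if `|A| = Σᵢ rᵢ(A)`; by submodularity of
the ranks, unions of tight sets are tight. To place an element `e`, look for an index `i` such that
contracting `e` in the `i`-th matroid, which replaces `rᵢ(A)` by `rᵢ(A + e) - 1`, preserves the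
hypothesis on `E - e`. If there were none, every `i` would have a tight `Aᵢ ⊆ E - e` that spans `e`
in `Mᵢ`; their union `T` is tight and spans `e` in every `Mᵢ`, so `|T + e| > Σᵢ rᵢ(T + e)`.
A partition of `E - e` for the contracted family then gives one of `E`, with `e` added to `Iᵢ`.
-/

open Finset Function

namespace PaperMatroid

variable {α : Type*} [DecidableEq α] [Fintype α]

section Rank

variable (M : PaperMatroid α)

theorem indep_empty : M.Indep ∅ :=
  let ⟨_, hI⟩ := M.nonempty
  M.subset_closed hI (empty_subset _)

theorem exists_maxIndepIn_superset {A I : Finset α} (hIA : I ⊆ A) (hI : M.Indep I) :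
    ∃ J, I ⊆ J ∧ M.MaxIndepIn A J := by
  classical
  set s := A.powerset.filter (fun J => M.Indep J ∧ I ⊆ J)
  obtain ⟨J, hJs, hJmax⟩ := s.exists_max_image card ⟨I, by simp [s, hIA, hI]⟩
  simp only [s, mem_filter, mem_powerset] at hJs
  refine ⟨J, hJs.2.2, hJs.1, hJs.2.1, fun K hKA hK hJK => ?_⟩
  exact (eq_of_subset_of_card_le hJK (hJmax K (by simp [s, hKA, hK, hJs.2.2.trans hJK]))).symm

theorem exists_maxIndepIn (A : Finset α) : ∃ J, M.MaxIndepIn A J :=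
  let ⟨J, _, hJ⟩ := M.exists_maxIndepIn_superset (empty_subset A) M.indep_empty
  ⟨J, hJ⟩

noncomputable def rank (A : Finset α) : ℕ := #(M.exists_maxIndepIn A).choose

variable {M}

theorem MaxIndepIn.card_eq_rank {A I : Finset α} (h : M.MaxIndepIn A I) : #I = M.rank A :=
  have h' := (M.exists_maxIndepIn A).choose_spec
  M.max_card_eq A I _ h.1 h.2.1 h.2.2 h'.1 h'.2.1 h'.2.2

theorem Indep.card_le_rank {A I : Finset α} (hI : M.Indep I) (hIA : I ⊆ A) : #I ≤ M.rank A := by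
  obtain ⟨J, hIJ, hJ⟩ := M.exists_maxIndepIn_superset hIA hI
  exact hJ.card_eq_rank ▸ card_le_card hIJ

theorem rank_mono {A B : Finset α} (hAB : A ⊆ B) : M.rank A ≤ M.rank B := by
  obtain ⟨J, hJ⟩ := M.exists_maxIndepIn A
  exact hJ.card_eq_rank ▸ hJ.2.1.card_le_rank (hJ.1.trans hAB)

variable (M) in
@[simp]
theorem rank_empty : M.rank ∅ = 0 := by
  obtain ⟨J, hJ⟩ := M.exists_maxIndepIn ∅
  rw [← hJ.card_eq_rank, subset_empty.mp hJ.1, card_empty]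

theorem indep_singleton_of_rank_pos {e : α} (h : 0 < M.rank {e}) : M.Indep {e} := by
  obtain ⟨J, hJ⟩ := M.exists_maxIndepIn {e}
  have hJe : J = {e} :=
    eq_of_subset_of_card_le hJ.1 (by rw [hJ.card_eq_rank, card_singleton]; exact h)
  exact hJe ▸ hJ.2.1

variable (M) in
theorem rank_union_add_rank_inter_le (X Y : Finset α) :
    M.rank (X ∪ Y) + M.rank (X ∩ Y) ≤ M.rank X + M.rank Y := by
  obtain ⟨B, hB⟩ := M.exists_maxIndepIn (X ∩ Y)
  obtain ⟨C, hBC, hC⟩ := M.exists_maxIndepIn_superset (hB.1.trans inter_subset_union) hB.2.1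
  have hCX : C ∩ X ∪ C ∩ Y = C := by rw [← inter_union_distrib_left, inter_eq_left.mpr hC.1]
  have hCXY : C ∩ X ∩ (C ∩ Y) = B := by
    rw [inter_inter_inter_comm, inter_self]
    exact hB.2.2 _ inter_subset_right (M.subset_closed hC.2.1 inter_subset_left)
      (subset_inter hBC hB.1)
  have hcard := card_union_add_card_inter (C ∩ X) (C ∩ Y)
  rw [hCX, hCXY] at hcard
  have hX : #(C ∩ X) ≤ M.rank X :=
    (M.subset_closed hC.2.1 inter_subset_left).card_le_rank inter_subset_right
  have hY : #(C ∩ Y) ≤ M.rank Y :=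
    (M.subset_closed hC.2.1 inter_subset_left).card_le_rank inter_subset_right
  rw [← hC.card_eq_rank, ← hB.card_eq_rank]
  omega

theorem rank_insert_eq_of_subset {e : α} {X Y : Finset α} (hXY : X ⊆ Y)
    (hX : M.rank (insert e X) = M.rank X) : M.rank (insert e Y) = M.rank Y := by
  by_cases heY : e ∈ Y
  · rw [insert_eq_of_mem heY]
  have hinter : Y ∩ insert e X = X := by
    rw [inter_insert_of_notMem heY, inter_eq_right.mpr hXY]
  have hsub := M.rank_union_add_rank_inter_le Y (insert e X)
  rw [union_insert, union_eq_left.mpr hXY, hinter, hX] at hsub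
  have hmono := rank_mono (M := M) (subset_insert e Y)
  omega

end Rank

section Contract

variable {M : PaperMatroid α} {e : α}

/-- The hypotheses say that `I` is a maximal independent subset of `A` in the contraction
`M / e`, spelled out because `contract` is built from this lemma. -/
theorem maxIndepIn_insert_of_maximal {A I : Finset α} (heI : e ∉ I) (hIA : I ⊆ A)
    (hI : M.Indep (insert e I))
    (hmax : ∀ J, J ⊆ A → e ∉ J ∧ M.Indep (insert e J) → I ⊆ J → J = I) :
    M.MaxIndepIn (insert e A) (insert e I) := by
  refine ⟨insert_subset_insert e hIA, hI, fun J hJA hJ hIJ => ?_⟩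
  have heJ : e ∈ J := hIJ (mem_insert_self e I)
  have hJA' : J.erase e ⊆ A := fun x hx =>
    (mem_insert.mp (hJA (mem_of_mem_erase hx))).resolve_left (ne_of_mem_erase hx)
  have hIJ' : I ⊆ J.erase e := fun x hx =>
    mem_erase.mpr ⟨fun hxe => heI (hxe ▸ hx), hIJ (mem_insert_of_mem hx)⟩
  rw [← insert_erase heJ, hmax _ hJA' ⟨notMem_erase e J, by rwa [insert_erase heJ]⟩ hIJ']

variable (M e) in
def contract (he : M.Indep {e}) : PaperMatroid α where
  Indep I := e ∉ I ∧ M.Indep (insert e I)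
  nonempty := ⟨∅, notMem_empty e, by simpa using he⟩
  subset_closed _ _ hI hJI :=
    ⟨fun h => hI.1 (hJI h), M.subset_closed hI.2 (insert_subset_insert e hJI)⟩
  max_card_eq A I₁ I₂ h₁A h₁ h₁max h₂A h₂ h₂max := by
    have m₁ := maxIndepIn_insert_of_maximal h₁.1 h₁A h₁.2 h₁max
    have m₂ := maxIndepIn_insert_of_maximal h₂.1 h₂A h₂.2 h₂max
    have hcard := M.max_card_eq _ _ _ m₁.1 m₁.2.1 m₁.2.2 m₂.1 m₂.2.1 m₂.2.2
    rwa [card_insert_of_notMem h₁.1, card_insert_of_notMem h₂.1, Nat.add_right_cancel_iff] at hcard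

theorem rank_contract_add_one (he : M.Indep {e}) (A : Finset α) :
    (M.contract e he).rank A + 1 = M.rank (insert e A) := by
  obtain ⟨I, hI⟩ := (M.contract e he).exists_maxIndepIn A
  have hIe : M.MaxIndepIn (insert e A) (insert e I) :=
    maxIndepIn_insert_of_maximal hI.2.1.1 hI.1 hI.2.1.2 hI.2.2
  rw [← hIe.card_eq_rank, ← hI.card_eq_rank, card_insert_of_notMem hI.2.1.1]

end Contract

section Partition

variable {ι : Type*}

structure IsIndepPartition (Ms : ι → PaperMatroid α) (E : Finset α) (I : ι → Finset α) :
    Prop where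
  pairwise_disjoint : Pairwise (Disjoint on I)
  subset : ∀ i, I i ⊆ E
  cover : ∀ a ∈ E, ∃ i, a ∈ I i
  indep : ∀ i, (Ms i).Indep (I i)

theorem isIndepPartition_empty (Ms : ι → PaperMatroid α) : IsIndepPartition Ms ∅ fun _ => ∅ :=
  ⟨fun _ _ _ => disjoint_empty_left _, fun _ => Subset.rfl, by simp, fun i => (Ms i).indep_empty⟩

theorem IsIndepPartition.insert_of_contract [DecidableEq ι] {Ms : ι → PaperMatroid α}
    {E : Finset α} {e : α} {i : ι} {he : (Ms i).Indep {e}} {I : ι → Finset α}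
    (hI : IsIndepPartition (update Ms i ((Ms i).contract e he)) E I) (heE : e ∉ E) :
    IsIndepPartition Ms (insert e E) (update I i (insert e (I i))) where
  pairwise_disjoint j k hjk := by
    have heI : ∀ j, e ∉ I j := fun j hj => heE (hI.subset j hj)
    have hIjk : Disjoint (I j) (I k) := hI.pairwise_disjoint hjk
    show Disjoint (update I i _ j) (update I i _ k)
    rcases eq_or_ne j i with rfl | hj
    · simpa [update_of_ne hjk.symm, heI k] using hIjk
    rcases eq_or_ne k i with rfl | hk
    · simpa [update_of_ne hj, heI j] using hIjk
    simpa [update_of_ne hj, update_of_ne hk] using hIjk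
  subset j := by
    rcases eq_or_ne j i with rfl | hj
    · simpa using insert_subset_insert e (hI.subset j)
    · simpa [update_of_ne hj] using (hI.subset j).trans (subset_insert e E)
  cover a ha := by
    rcases mem_insert.mp ha with rfl | ha
    · exact ⟨i, by simp⟩
    obtain ⟨j, hj⟩ := hI.cover a ha
    refine ⟨j, ?_⟩
    rcases eq_or_ne j i with rfl | hji
    · simp [hj]
    · simpa [update_of_ne hji] using hj
  indep j := by
    rcases eq_or_ne j i with rfl | hj
    · have hIj := hI.indep j
      rw [update_self] at hIj
      simpa using hIj.2
    · simpa [update_of_ne hj] using hI.indep j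

variable [Fintype ι] {Ms : ι → PaperMatroid α} {E : Finset α}

theorem sum_rank_union_eq_card (h : ∀ A ⊆ E, #A ≤ ∑ i, (Ms i).rank A) {A B : Finset α}
    (hA : A ⊆ E) (hB : B ⊆ E) (hAt : ∑ i, (Ms i).rank A = #A) (hBt : ∑ i, (Ms i).rank B = #B) :
    ∑ i, (Ms i).rank (A ∪ B) = #(A ∪ B) := by
  have hsub : ∑ i, (Ms i).rank (A ∪ B) + ∑ i, (Ms i).rank (A ∩ B) ≤
      ∑ i, (Ms i).rank A + ∑ i, (Ms i).rank B := by
    simp only [← sum_add_distrib]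
    exact sum_le_sum fun i _ => (Ms i).rank_union_add_rank_inter_le A B
  have hinter := h (A ∩ B) (inter_subset_left.trans hA)
  have hunion := h (A ∪ B) (union_subset hA hB)
  have hcard := card_union_add_card_inter A B
  omega

theorem sum_rank_biUnion_eq_card (h : ∀ A ⊆ E, #A ≤ ∑ i, (Ms i).rank A) {κ : Type*}
    (s : Finset κ) {A : κ → Finset α} (hA : ∀ k, A k ⊆ E)
    (hAt : ∀ k, ∑ i, (Ms i).rank (A k) = #(A k)) :
    ∑ i, (Ms i).rank (s.biUnion A) = #(s.biUnion A) := by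
  classical
  induction s using Finset.induction_on with
  | empty => simp
  | insert k s _ ih =>
    rw [biUnion_insert]
    exact sum_rank_union_eq_card h (hA k) (biUnion_subset.mpr fun k _ => hA k) (hAt k) ih

theorem exists_index_card_add_rank_lt {e : α} (heE : e ∉ E)
    (h : ∀ A ⊆ insert e E, #A ≤ ∑ i, (Ms i).rank A) :
    ∃ i, ∀ A ⊆ E, #A + (Ms i).rank A < ∑ j, (Ms j).rank A + (Ms i).rank (insert e A) := by
  by_contra! hbad
  choose A hAE hA using hbad
  have hE : ∀ B ⊆ E, #B ≤ ∑ i, (Ms i).rank B := fun B hB => h B (hB.trans (subset_insert e E))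
  have hAt : ∀ i, ∑ j, (Ms j).rank (A i) = #(A i) ∧
      (Ms i).rank (insert e (A i)) = (Ms i).rank (A i) := fun i => by
    have hcard := hE (A i) (hAE i)
    have hmono := rank_mono (M := Ms i) (subset_insert e (A i))
    have hAi := hA i
    omega
  set T := univ.biUnion A
  have hTE : T ⊆ E := biUnion_subset.mpr fun i _ => hAE i
  have hTt : ∑ i, (Ms i).rank T = #T :=
    sum_rank_biUnion_eq_card hE univ hAE fun i => (hAt i).1
  have hTe : ∀ i, (Ms i).rank (insert e T) = (Ms i).rank T := fun i =>
    rank_insert_eq_of_subset (subset_biUnion_of_mem A (mem_univ i)) (hAt i).2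
  have hcard := h (insert e T) (insert_subset_insert e hTE)
  rw [card_insert_of_notMem fun heT => heE (hTE heT), sum_congr rfl fun i _ => hTe i] at hcard
  omega

theorem exists_contract_card_le_sum_rank [DecidableEq ι] {e : α} (heE : e ∉ E)
    (h : ∀ A ⊆ insert e E, #A ≤ ∑ i, (Ms i).rank A) :
    ∃ i, ∃ he : (Ms i).Indep {e},
      ∀ A ⊆ E, #A ≤ ∑ j, (update Ms i ((Ms i).contract e he) j).rank A := by
  obtain ⟨i, hi⟩ := exists_index_card_add_rank_lt heE h
  have he : (Ms i).Indep {e} := indep_singleton_of_rank_pos (by simpa using hi ∅ (empty_subset E))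
  refine ⟨i, he, fun A hA => ?_⟩
  have hcontract := (Ms i).rank_contract_add_one he A
  have hsum := add_sum_erase univ (fun j => (Ms j).rank A) (mem_univ i)
  rw [← add_sum_erase _ _ (mem_univ i), update_self,
    sum_congr rfl fun j hj => by rw [update_of_ne (ne_of_mem_erase hj)]]
  have hiA := hi A hA
  omega

theorem exists_isIndepPartition [DecidableEq ι] (Ms : ι → PaperMatroid α) (E : Finset α)
    (h : ∀ A ⊆ E, #A ≤ ∑ i, (Ms i).rank A) : ∃ I, IsIndepPartition Ms E I := by
  induction E using Finset.induction_on generalizing Ms with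
  | empty => exact ⟨_, isIndepPartition_empty Ms⟩
  | insert e E heE ih =>
    obtain ⟨i, he, hcontract⟩ := exists_contract_card_le_sum_rank heE h
    obtain ⟨I, hI⟩ := ih _ hcontract
    exact ⟨_, hI.insert_of_contract heE⟩

end Partition

end PaperMatroid

/-- Edmonds'\'' matroid partition theorem (hard direction): if every `A ⊆ E` satisfies
`|A| ≤ Σᵢ rᵢ(A)`, then `E` can be partitioned into sets `I i ∈ F i`. -/
theorem exists_partition_of_card_le_sum_rank {α : Type*} [DecidableEq α] [Fintype α]
    (m : ℕ) (Ms : Fin m → PaperMatroid α)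
    (r : Fin m → Finset α → ℕ)
    (hr : ∀ i (A I : Finset α), (Ms i).MaxIndepIn A I → I.card = r i A)
    (h : ∀ A : Finset α, A.card ≤ ∑ i, r i A) :
    ∃ I : Fin m → Finset α,
      (∀ i j, i ≠ j → Disjoint (I i) (I j)) ∧
      (∀ a : α, ∃ i, a ∈ I i) ∧
      (∀ i, (Ms i).Indep (I i)) := by
  have hrank : ∀ i A, r i A = (Ms i).rank A := fun i A =>
    let ⟨J, hJ⟩ := (Ms i).exists_maxIndepIn A
    (hr i A J hJ).symm.trans hJ.card_eq_rank
  obtain ⟨I, hI⟩ :=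
    PaperMatroid.exists_isIndepPartition Ms univ fun A _ => by simpa [hrank] using h A
  exact ⟨I, fun _ _ hij => hI.pairwise_disjoint hij, fun a => hI.cover a (mem_univ a), hI.indep⟩
end

section
/- Let (E,Fᵢ), i=1,...,m, be matroids on a finite set E admitting a partition E = I₁ ∪ ... ∪ I_m with Iᵢ ∈ Fᵢ, where F_m = F^{(l,E)} is the uniform matroid of rank l. Suppose E belongs to the set G = {A ⊆ E : |A| = l + Σ_{i=1}^{m-1} rᵢ(A)}. Then G is closed under union and intersection of sets; in particular G has a unique minimal element with respect to inclusion. -/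
/-- Any independent subset of `A` extends to a maximal independent subset of `A`. -/
lemma PaperMatroid.exists_maxIndepIn_s5 {α : Type*} [DecidableEq α] [Fintype α]
    (M : PaperMatroid α) (A S : Finset α) (hSA : S ⊆ A) (hS : M.Indep S) :
    ∃ J, M.MaxIndepIn A J ∧ S ⊆ J := by
  classical
  obtain ⟨J, hJ, hmax⟩ := Finset.exists_max_image
    (A.powerset.filter (fun J => M.Indep J ∧ S ⊆ J)) Finset.card
    ⟨S, by simp [hSA, hS]⟩
  simp only [Finset.mem_filter, Finset.mem_powerset] at hJ
  refine ⟨J, ⟨hJ.1, hJ.2.1, ?_⟩, hJ.2.2⟩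
  intro K hKA hK hJK
  have hKmem : K ∈ A.powerset.filter (fun J => M.Indep J ∧ S ⊆ J) := by
    simp [hKA, hK, hJ.2.2.trans hJK]
  exact (Finset.eq_of_subset_of_card_le hJK (hmax K hKmem)).symm

/-- Matroids `Ms 0, ..., Ms m` on a finite set, the last one being the uniform matroid
of rank `l`, admitting a partition into independent sets, and with the whole set in
`G = {A : |A| = l + Σ_{i<m} rᵢ(A)}` (the sum over the non-uniform matroids).
Then `G` is closed under union and intersection; in particular it has a unique
minimal element with respect to inclusion. -/
theorem G_closed_union_inter {α : Type*} [DecidableEq α] [Fintype α]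
    (m l : ℕ) (hl : l ≤ Fintype.card α)
    (Ms : Fin (m + 1) → PaperMatroid α)
    (huni : ∀ I : Finset α, (Ms (Fin.last m)).Indep I ↔ I.card ≤ l)
    (r : Fin m → Finset α → ℕ)
    (hr : ∀ i (A I : Finset α), (Ms i.castSucc).MaxIndepIn A I → I.card = r i A)
    (I : Fin (m + 1) → Finset α)
    (hdisj : ∀ i j, i ≠ j → Disjoint (I i) (I j))
    (hcover : ∀ a : α, ∃ i, a ∈ I i)
    (hindep : ∀ i, (Ms i).Indep (I i))
    (G : Set (Finset α)) (hG : G = {A : Finset α | A.card = l + ∑ i, r i A})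
    (hE : (Finset.univ : Finset α) ∈ G) :
    (∀ A ∈ G, ∀ B ∈ G, A ∪ B ∈ G ∧ A ∩ B ∈ G) ∧
    ∃ Amin ∈ G, ∀ B ∈ G, Amin ⊆ B := by
  classical
  subst hG
  simp only [Set.mem_setOf_eq] at hE ⊢
  have hempty : ∀ i, (Ms i).Indep ∅ := by
    intro i
    obtain ⟨J, hJ⟩ := (Ms i).nonempty
    exact (Ms i).subset_closed hJ (Finset.empty_subset J)
  -- any independent subset of A has card ≤ r i A
  have hcard_le : ∀ (i : Fin m) (A S : Finset α), S ⊆ A → (Ms i.castSucc).Indep S →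
      S.card ≤ r i A := by
    intro i A S hSA hS
    obtain ⟨J, hJ, hSJ⟩ := (Ms i.castSucc).exists_maxIndepIn_s5 A S hSA hS
    calc S.card ≤ J.card := Finset.card_le_card hSJ
    _ = r i A := hr i A J hJ
  -- submodularity
  have hsubmod : ∀ (i : Fin m) (A B : Finset α),
      r i (A ∪ B) + r i (A ∩ B) ≤ r i A + r i B := by
    intro i A B
    obtain ⟨X, hX, -⟩ := (Ms i.castSucc).exists_maxIndepIn_s5 (A ∩ B) ∅
      (Finset.empty_subset _) (hempty _)
    obtain ⟨J, hJ, hXJ⟩ := (Ms i.castSucc).exists_maxIndepIn_s5 (A ∪ B) X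
      (hX.1.trans (Finset.inter_subset_union)) hX.2.1
    have hXeq : J ∩ (A ∩ B) = X :=
      hX.2.2 (J ∩ (A ∩ B)) Finset.inter_subset_right
        ((Ms _).subset_closed hJ.2.1 Finset.inter_subset_left)
        (Finset.subset_inter hXJ hX.1)
    have hunion : (J ∩ A) ∪ (J ∩ B) = J := by
      rw [← Finset.inter_union_distrib_left]
      exact Finset.inter_eq_left.mpr hJ.1
    have hinter : (J ∩ A) ∩ (J ∩ B) = J ∩ (A ∩ B) := by
      ext a; simp only [Finset.mem_inter]; tauto
    have hcards : (J ∩ A).card + (J ∩ B).card = J.card + X.card := by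
      rw [← Finset.card_union_add_card_inter, hunion, hinter, hXeq]
    have h1 : (J ∩ A).card ≤ r i A :=
      hcard_le i A _ Finset.inter_subset_right
        ((Ms _).subset_closed hJ.2.1 Finset.inter_subset_left)
    have h2 : (J ∩ B).card ≤ r i B :=
      hcard_le i B _ Finset.inter_subset_right
        ((Ms _).subset_closed hJ.2.1 Finset.inter_subset_left)
    have hJr : J.card = r i (A ∪ B) := hr i _ J hJ
    have hXr : X.card = r i (A ∩ B) := hr i _ X hX
    omega
  -- the general lower bound |A| ≤ l + ∑ r i A
  have hle : ∀ A : Finset α, A.card ≤ l + ∑ i, r i A := by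
    intro A
    set f : α → Fin (m + 1) := fun a => Classical.choose (hcover a) with hf
    have hfmem : ∀ a, a ∈ I (f a) := fun a => Classical.choose_spec (hcover a)
    have hAcard : A.card = ∑ i, (A.filter (fun a => f a = i)).card :=
      Finset.card_eq_sum_card_fiberwise (fun a _ => Finset.mem_univ (f a))
    have hfilter : ∀ i, A.filter (fun a => f a = i) = A ∩ I i := by
      intro i
      ext a
      simp only [Finset.mem_filter, Finset.mem_inter]
      constructor
      · rintro ⟨ha, rfl⟩; exact ⟨ha, hfmem a⟩
      · rintro ⟨ha, hai⟩
        refine ⟨ha, ?_⟩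
        by_contra hne
        exact Finset.disjoint_left.mp (hdisj (f a) i hne) (hfmem a) hai
    rw [hAcard]
    simp only [hfilter]
    rw [Fin.sum_univ_castSucc, add_comm l]
    refine add_le_add (Finset.sum_le_sum fun i _ => ?_) ?_
    · exact hcard_le i A _ Finset.inter_subset_left
        ((Ms _).subset_closed (hindep _) Finset.inter_subset_right)
    · exact (huni _).mp ((Ms _).subset_closed (hindep _) Finset.inter_subset_right)
  -- closure under union and intersection
  have key : ∀ A B : Finset α, A.card = l + ∑ i, r i A → B.card = l + ∑ i, r i B →
      (A ∪ B).card = l + ∑ i, r i (A ∪ B) ∧ (A ∩ B).card = l + ∑ i, r i (A ∩ B) := by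
    intro A B hA hB
    have h1 := Finset.card_union_add_card_inter A B
    have h2 := hle (A ∪ B)
    have h3 := hle (A ∩ B)
    have h4 : ∑ i, r i (A ∪ B) + ∑ i, r i (A ∩ B) ≤ ∑ i, r i A + ∑ i, r i B := by
      rw [← Finset.sum_add_distrib, ← Finset.sum_add_distrib]
      exact Finset.sum_le_sum fun i _ => hsubmod i A B
    omega
  refine ⟨fun A hA B hB => key A B hA hB, ?_⟩
  -- minimal element: element of minimal cardinality
  obtain ⟨Amin, hAS, hmin⟩ := Finset.exists_min_image
    (Finset.univ.filter (fun A : Finset α => A.card = l + ∑ i, r i A)) Finset.card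
    ⟨Finset.univ, by simpa using hE⟩
  simp only [Finset.mem_filter, Finset.mem_univ, true_and] at hAS hmin
  refine ⟨Amin, hAS, fun B hB => ?_⟩
  have hint : (Amin ∩ B).card = l + ∑ i, r i (Amin ∩ B) := (key Amin B hAS hB).2
  have hcle : Amin.card ≤ (Amin ∩ B).card := hmin _ (by simpa using hint)
  have : Amin ∩ B = Amin :=
    Finset.eq_of_subset_of_card_le Finset.inter_subset_left hcle
  calc Amin = Amin ∩ B := this.symm
  _ ⊆ B := Finset.inter_subset_right
end

section
/- Fix a matroid (J,F) of rank k on J = {1,...,n}, integers m ≥ 1 and l ≥ 0, and a strong (mk+l)-system T. Define G(T) = {B ⊆ supp T : Σ_{j∈B} T(j) = l + m·r(B)}. Then supp T ∈ G(T) and G(T) is closed under union and intersection of sets; in particular G(T) has a unique minimal element A_min(T) with respect to inclusion. -/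
/-- The support of a system `T : Fin n → ℕ`. -/
def suppSys {n : ℕ} (T : Fin n → ℕ) : Finset (Fin n) :=
  Finset.univ.filter (fun j => T j ≠ 0)

/-- The indicator system `[j]`. -/
def indSys {n : ℕ} (j : Fin n) : Fin n → ℕ := fun i => if i = j then 1 else 0

/-- A base of the rank-`k` matroid `(J,F)`: a `k`-system with values in `{0,1}`
whose support is independent. -/
def IsBaseSys {n : ℕ} (M : PaperMatroid (Fin n)) (k : ℕ) (T : Fin n → ℕ) : Prop :=
  M.Indep (suppSys T) ∧ (∀ j, T j ≤ 1) ∧ ∑ j, T j = k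

/-- `T` decomposes as a sum of `m` bases and the system `last`. -/
def StrongDecompWith {n : ℕ} (M : PaperMatroid (Fin n)) (k m : ℕ)
    (T last : Fin n → ℕ) : Prop :=
  ∃ B : Fin m → (Fin n → ℕ), (∀ i, IsBaseSys M k (B i)) ∧ T = (∑ i, B i) + last

/-- `T` is a strong `(mk+l)`-system: it is an `(mk+l)`-system admitting a strong
decomposition into `m` bases and an `l`-system. -/
def IsStrongSys {n : ℕ} (M : PaperMatroid (Fin n)) (k m l : ℕ) (T : Fin n → ℕ) : Prop :=
  (∑ j, T j = m * k + l) ∧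
  ∃ last : Fin n → ℕ, (∑ j, last j = l) ∧ StrongDecompWith M k m T last
section Aux
variable {α : Type*} [DecidableEq α] [Fintype α] (M : PaperMatroid α)

lemma PaperMatroid.indep_empty_s10 : M.Indep ∅ := by
  obtain ⟨I, hI⟩ := M.nonempty
  exact M.subset_closed hI (Finset.empty_subset I)

lemma PaperMatroid.exists_max_extend (A I : Finset α) (hIA : I ⊆ A) (hI : M.Indep I) :
    ∃ J, M.MaxIndepIn A J ∧ I ⊆ J := by
  classical
  obtain ⟨J, hJ, hmax⟩ := Finset.exists_max_image
    (A.powerset.filter fun J => M.Indep J ∧ I ⊆ J) Finset.card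
    ⟨I, by simp [hIA, hI]⟩
  simp only [Finset.mem_filter, Finset.mem_powerset] at hJ
  refine ⟨J, ⟨hJ.1, hJ.2.1, fun K hKA hK hJK => ?_⟩, hJ.2.2⟩
  have hKmem : K ∈ A.powerset.filter fun J => M.Indep J ∧ I ⊆ J := by
    simp [hKA, hK, hJ.2.2.trans hJK]
  exact (Finset.eq_of_subset_of_card_le hJK (hmax K hKmem)).symm

lemma card_le_rank (r : Finset α → ℕ)
    (hr : ∀ A I, M.MaxIndepIn A I → I.card = r A)
    {A I : Finset α} (hIA : I ⊆ A) (hI : M.Indep I) : I.card ≤ r A := by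
  obtain ⟨J, hJ, hIJ⟩ := M.exists_max_extend A I hIA hI
  exact (hr A J hJ) ▸ Finset.card_le_card hIJ

lemma rank_submod (r : Finset α → ℕ)
    (hr : ∀ A I, M.MaxIndepIn A I → I.card = r A) (A B : Finset α) :
    r (A ∪ B) + r (A ∩ B) ≤ r A + r B := by
  obtain ⟨I, hI, -⟩ := M.exists_max_extend (A ∩ B) ∅ (Finset.empty_subset _) M.indep_empty_s10
  obtain ⟨J, hJ, hIJ⟩ := M.exists_max_extend (A ∪ B) I
    (hI.1.trans ((Finset.inter_subset_left).trans Finset.subset_union_left)) hI.2.1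
  have hJA : (J ∩ A).card ≤ r A :=
    card_le_rank M r hr Finset.inter_subset_right
      (M.subset_closed hJ.2.1 Finset.inter_subset_left)
  have hJB : (J ∩ B).card ≤ r B :=
    card_le_rank M r hr Finset.inter_subset_right
      (M.subset_closed hJ.2.1 Finset.inter_subset_left)
  have hJAB : J ∩ (A ∩ B) = I :=
    hI.2.2 (J ∩ (A ∩ B)) Finset.inter_subset_right
      (M.subset_closed hJ.2.1 Finset.inter_subset_left)
      (Finset.subset_inter hIJ hI.1)
  have hu : (J ∩ A) ∪ (J ∩ B) = J := by
    rw [← Finset.inter_union_distrib_left]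
    exact Finset.inter_eq_left.2 hJ.1
  have hi : (J ∩ A) ∩ (J ∩ B) = I := by
    rw [← hJAB]; ext j; simp only [Finset.mem_inter]; tauto
  have hcard := Finset.card_union_add_card_inter (J ∩ A) (J ∩ B)
  rw [hu, hi] at hcard
  have h1 : r (A ∪ B) = J.card := (hr _ _ hJ).symm
  have h2 : r (A ∩ B) = I.card := (hr _ _ hI).symm
  omega

end Aux

/-- For a strong `(mk+l)`-system `T`, the set
`G(T) = {B ⊆ supp T : Σ_{j∈B} T(j) = l + m·r(B)}` contains `supp T`, is closed
under union and intersection, and has a unique minimal element w.r.t. inclusion. -/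
theorem G_of_strong_system {n k m l : ℕ} (hn : 0 < n) (hk : 0 < k) (hm : 1 ≤ m)
    (hnk : k ≤ n)
    (M : PaperMatroid (Fin n))
    (r : Finset (Fin n) → ℕ)
    (hr : ∀ A I, M.MaxIndepIn A I → I.card = r A)
    (hrank : r Finset.univ = k)
    (T : Fin n → ℕ) (hT : IsStrongSys M k m l T)
    (G : Set (Finset (Fin n)))
    (hG : G = {B : Finset (Fin n) | B ⊆ suppSys T ∧ ∑ j ∈ B, T j = l + m * r B}) :
    suppSys T ∈ G ∧
    (∀ A ∈ G, ∀ B ∈ G, A ∪ B ∈ G ∧ A ∩ B ∈ G) ∧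
    ∃ Amin ∈ G, ∀ B ∈ G, Amin ⊆ B := by
  classical
  obtain ⟨hTsum, last, hlast, B, hB, hTeq⟩ := hT
  have hTj : ∀ j, T j = (∑ i, B i j) + last j := by
    intro j; rw [hTeq]; simp
  -- upper bound on sums over any subset
  have key : ∀ C : Finset (Fin n), ∑ j ∈ C, T j ≤ l + m * r C := by
    intro C
    have h1 : ∀ i : Fin m, ∑ j ∈ C, B i j ≤ r C := by
      intro i
      have hfil : (C.filter fun j => B i j ≠ 0) ⊆ suppSys (B i) := by
        intro j hj
        simp only [Finset.mem_filter] at hj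
        simp [suppSys, hj.2]
      calc ∑ j ∈ C, B i j = ∑ j ∈ C.filter (fun j => B i j ≠ 0), B i j :=
            (Finset.sum_filter_ne_zero C).symm
        _ = ∑ j ∈ C.filter (fun j => B i j ≠ 0), 1 := by
            refine Finset.sum_congr rfl fun j hj => ?_
            simp only [Finset.mem_filter] at hj
            have := (hB i).2.1 j
            omega
        _ = (C.filter fun j => B i j ≠ 0).card := by simp
        _ ≤ r C := card_le_rank M r hr (Finset.filter_subset _ _)
            (M.subset_closed (hB i).1 hfil)
    calc ∑ j ∈ C, T j = ∑ j ∈ C, ((∑ i, B i j) + last j) := by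
          exact Finset.sum_congr rfl fun j _ => hTj j
      _ = (∑ j ∈ C, ∑ i, B i j) + ∑ j ∈ C, last j := Finset.sum_add_distrib
      _ = (∑ i, ∑ j ∈ C, B i j) + ∑ j ∈ C, last j := by rw [Finset.sum_comm]
      _ ≤ (∑ _i : Fin m, r C) + ∑ j, last j :=
          add_le_add (Finset.sum_le_sum fun i _ => h1 i)
            (Finset.sum_le_sum_of_subset (Finset.subset_univ C))
      _ = m * r C + l := by
          rw [Finset.sum_const, Finset.card_univ, Fintype.card_fin, smul_eq_mul, hlast]
      _ = l + m * r C := Nat.add_comm _ _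
  -- the rank of supp T is k
  set i0 : Fin m := ⟨0, hm⟩ with hi0
  have hsuppB : suppSys (B i0) ⊆ suppSys T := by
    intro j hj
    simp only [suppSys, Finset.mem_filter, Finset.mem_univ, true_and] at hj ⊢
    have h1 : B i0 j ≤ ∑ i, B i j :=
      Finset.single_le_sum (f := fun i => B i j) (fun _ _ => Nat.zero_le _) (Finset.mem_univ i0)
    have := hTj j
    omega
  have hscard : (suppSys (B i0)).card = k := by
    have h2 : ∑ j ∈ suppSys (B i0), B i0 j = ∑ j, B i0 j := by
      simp only [suppSys]
      exact Finset.sum_filter_ne_zero Finset.univ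
    have h3 : ∀ j ∈ suppSys (B i0), B i0 j = 1 := by
      intro j hj
      simp only [suppSys, Finset.mem_filter] at hj
      have := (hB i0).2.1 j
      omega
    calc (suppSys (B i0)).card = ∑ j ∈ suppSys (B i0), 1 := by simp
      _ = ∑ j ∈ suppSys (B i0), B i0 j := (Finset.sum_congr rfl fun j hj => (h3 j hj).symm)
      _ = ∑ j, B i0 j := h2
      _ = k := (hB i0).2.2
  have hrsupp : r (suppSys T) = k := by
    apply le_antisymm
    · obtain ⟨I, hI, -⟩ := M.exists_max_extend (suppSys T) ∅ (Finset.empty_subset _)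
        M.indep_empty_s10
      have h1 : r (suppSys T) = I.card := (hr _ _ hI).symm
      have h2 : I.card ≤ r Finset.univ :=
        card_le_rank M r hr (Finset.subset_univ I) hI.2.1
      omega
    · have := card_le_rank M r hr hsuppB (hB i0).1
      omega
  -- supp T ∈ G
  have hsum_supp : ∑ j ∈ suppSys T, T j = ∑ j, T j := by
    simp only [suppSys]
    exact Finset.sum_filter_ne_zero Finset.univ
  have hsuppG : suppSys T ∈ G := by
    rw [hG]
    refine ⟨Finset.Subset.refl _, ?_⟩
    rw [hsum_supp, hTsum, hrsupp]
    ring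
  -- closure under union and intersection
  have hclosed : ∀ A' ∈ G, ∀ B' ∈ G, A' ∪ B' ∈ G ∧ A' ∩ B' ∈ G := by
    intro A' hA' B' hB'
    rw [hG] at hA' hB' ⊢
    obtain ⟨hA's, hA'e⟩ := hA'
    obtain ⟨hB's, hB'e⟩ := hB'
    have hsum : ∑ j ∈ A' ∪ B', T j + ∑ j ∈ A' ∩ B', T j = ∑ j ∈ A', T j + ∑ j ∈ B', T j :=
      Finset.sum_union_inter
    have hul := key (A' ∪ B')
    have hil := key (A' ∩ B')
    have hsub := rank_submod M r hr A' B'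
    have hmul := Nat.mul_le_mul_left m hsub
    rw [Nat.mul_add, Nat.mul_add] at hmul
    constructor
    · refine ⟨Finset.union_subset hA's hB's, ?_⟩
      set a := m * r (A' ∪ B')
      set b := m * r (A' ∩ B')
      set c := m * r A'
      set d := m * r B'
      omega
    · refine ⟨(Finset.inter_subset_left).trans hA's, ?_⟩
      set a := m * r (A' ∪ B')
      set b := m * r (A' ∩ B')
      set c := m * r A'
      set d := m * r B'
      omega
  refine ⟨hsuppG, hclosed, ?_⟩
  obtain ⟨Amin, hAmin, hmin⟩ :=
    Set.exists_min_image G Finset.card G.toFinite ⟨suppSys T, hsuppG⟩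
  refine ⟨Amin, hAmin, fun B' hB' => ?_⟩
  have hint : Amin ∩ B' ∈ G := (hclosed Amin hAmin B' hB').2
  have hle : Amin.card ≤ (Amin ∩ B').card := hmin _ hint
  have heq : Amin ∩ B' = Amin :=
    Finset.eq_of_subset_of_card_le Finset.inter_subset_left hle
  exact Finset.inter_eq_left.1 heq
end

section
/- Fix a matroid (J,F) of rank k on J = {1,...,n} and m ≥ 1. Let S and T be two strong (mk+1)-systems. Then at least one of the following holds: (α) T has a strong decomposition T = T^{(1)}+...+T^{(m+1)} with T^{(m+1)} = [i] for some i ∈ supp T with T(i) > S(i); or (β) for every strong decomposition S = S^{(1)}+...+S^{(m+1)} there is a strong decomposition T = T^{(1)}+...+T^{(m+1)} with T^{(m+1)} = S^{(m+1)}. -/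
open Finset

section Basics
variable {α : Type*} [DecidableEq α] [Fintype α] {M : PaperMatroid α} {r : Finset α → ℕ}

theorem M_empty_indep (M : PaperMatroid α) : M.Indep ∅ := by
  obtain ⟨I, hI⟩ := M.nonempty
  exact M.subset_closed hI (empty_subset I)

theorem exists_maxIndepIn_superset (M : PaperMatroid α) {I A : Finset α}
    (hI : M.Indep I) (hIA : I ⊆ A) : ∃ K, M.MaxIndepIn A K ∧ I ⊆ K := by
  classical
  set s := A.powerset.filter (fun K => M.Indep K ∧ I ⊆ K) with hs
  have hne : s.Nonempty := ⟨I, by simp [hs, hI, hIA]⟩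
  obtain ⟨K, hKs, hKmax⟩ := s.exists_max_image card hne
  simp only [hs, mem_filter, mem_powerset] at hKs
  refine ⟨K, ⟨hKs.1, hKs.2.1, ?_⟩, hKs.2.2⟩
  intro J hJA hJ hKJ
  have hJs : J ∈ s := by simp [hs, hJA, hJ, hKs.2.2.trans hKJ]
  exact (eq_of_subset_of_card_le hKJ (hKmax J hJs)).symm

theorem exists_maxIndepIn (M : PaperMatroid α) (A : Finset α) : ∃ K, M.MaxIndepIn A K :=
  (exists_maxIndepIn_superset M (M_empty_indep M) (empty_subset A)).imp fun _ h => h.1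

variable (hr : ∀ A I, M.MaxIndepIn A I → I.card = r A)
include hr

theorem card_le_r {I A : Finset α} (hI : M.Indep I) (hIA : I ⊆ A) : I.card ≤ r A := by
  obtain ⟨K, hK, hIK⟩ := exists_maxIndepIn_superset M hI hIA
  exact (card_le_card hIK).trans_eq (hr A K hK)

theorem r_le_card (A : Finset α) : r A ≤ A.card := by
  obtain ⟨K, hK⟩ := exists_maxIndepIn M A
  exact (hr A K hK) ▸ card_le_card hK.1

theorem r_mono {A B : Finset α} (hAB : A ⊆ B) : r A ≤ r B := by
  obtain ⟨K, hK⟩ := exists_maxIndepIn M A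
  exact (hr A K hK) ▸ card_le_r hr hK.2.1 (hK.1.trans hAB)

theorem r_indep {I : Finset α} (hI : M.Indep I) : r I = I.card :=
  ((hr I I ⟨Subset.rfl, hI, fun J hJA _ hIJ => Subset.antisymm hJA hIJ⟩)).symm

theorem indep_of_r_eq_card {A : Finset α} (h : r A = A.card) : M.Indep A := by
  obtain ⟨K, hK⟩ := exists_maxIndepIn M A
  have : K = A := eq_of_subset_of_card_le hK.1 (by rw [hr A K hK, h])
  exact this ▸ hK.2.1

theorem r_submod (A B : Finset α) : r (A ∪ B) + r (A ∩ B) ≤ r A + r B := by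
  obtain ⟨I0, hI0⟩ := exists_maxIndepIn M (A ∩ B)
  obtain ⟨I1, hI1, hI01⟩ := exists_maxIndepIn_superset M hI0.2.1
    (hI0.1.trans (inter_subset_left.trans subset_union_left))
  have h0 : I0.card = r (A ∩ B) := hr _ _ hI0
  have h1 : I1.card = r (A ∪ B) := hr _ _ hI1
  have hIA : (I1 ∩ A).card ≤ r A := card_le_r hr (M.subset_closed hI1.2.1 inter_subset_left) inter_subset_right
  have hIB : (I1 ∩ B).card ≤ r B := card_le_r hr (M.subset_closed hI1.2.1 inter_subset_left) inter_subset_right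
  have hcap : I1 ∩ (A ∩ B) = I0 := by
    refine hI0.2.2 _ (inter_subset_right) (M.subset_closed hI1.2.1 inter_subset_left) ?_
    exact subset_inter hI01 hI0.1
  have key : (I1 ∩ A).card + (I1 ∩ B).card = I1.card + I0.card := by
    have := card_union_add_card_inter (I1 ∩ A) (I1 ∩ B)
    rw [← inter_union_distrib_left, ← inter_inter_distrib_left, hcap,
      (inter_eq_left.mpr hI1.1)] at this
    omega
  omega

theorem span_mono {A B : Finset α} {x : α} (hAB : A ⊆ B)
    (h : r (insert x A) = r A) : r (insert x B) = r B := by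
  by_cases hx : x ∈ B
  · rw [insert_eq_self.mpr hx]
  have hsub := r_submod (M := M) hr (insert x A) B
  rw [insert_union, union_eq_right.mpr hAB] at hsub
  have hint : insert x A ∩ B = A := by
    rw [insert_inter_of_notMem hx, inter_eq_left.mpr hAB]
  rw [hint, h] at hsub
  exact le_antisymm (by omega) (r_mono hr (subset_insert x B))

end Basics

section Exchange
variable {α : Type*} [DecidableEq α] [Fintype α] {M : PaperMatroid α} {r : Finset α → ℕ}
variable (hr : ∀ A I, M.MaxIndepIn A I → I.card = r A)
include hr

theorem r_insert_dep {I : Finset α} {u : α} (hI : M.Indep I) (hu : u ∉ I)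
    (hdep : ¬ M.Indep (insert u I)) : r (insert u I) = I.card := by
  refine (hr _ I ⟨subset_insert u I, hI, ?_⟩).symm
  intro J hJA hJ hIJ
  by_cases huJ : u ∈ J
  · have hJe : J = insert u I := Subset.antisymm hJA (insert_subset huJ hIJ)
    exact absurd (hJe ▸ hJ) hdep
  · exact Subset.antisymm (fun z hz => (mem_insert.mp (hJA hz)).resolve_left
      (fun h => huJ (h ▸ hz))) hIJ

theorem r_insert_le (A : Finset α) (x : α) : r (insert x A) ≤ r A + 1 := by
  have h := r_submod (M := M) hr A {x}
  have h1 : r {x} ≤ 1 := (r_le_card hr {x}).trans (by simp)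
  have h2 : insert x A = A ∪ {x} := by ext z; simp [or_comm]
  rw [h2]
  omega

theorem key_erase {I : Finset α} {u : α} (hI : M.Indep I) (hu : u ∉ I)
    (hdep : ¬ M.Indep (insert u I)) (D' : Finset α)
    (hD' : ∀ y ∈ D', y ∈ I ∧ ¬ M.Indep (insert u (I.erase y))) :
    r (insert u (I \ D')) = I.card - D'.card := by
  classical
  induction D' using Finset.induction_on with
  | empty => simpa using r_insert_dep hr hI hu hdep
  | @insert y D' hy IH =>
    have hyD := hD' y (mem_insert_self y D')
    have hD'sub : ∀ z ∈ D', z ∈ I ∧ ¬ M.Indep (insert u (I.erase z)) :=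
      fun z hz => hD' z (mem_insert_of_mem hz)
    have hD'I : D' ⊆ I := fun z hz => (hD'sub z hz).1
    have hA : r (insert u (I \ D')) = I.card - D'.card := IH hD'sub
    have hB : r (insert u (I.erase y)) = I.card - 1 := by
      have := r_insert_dep hr (M.subset_closed hI (erase_subset y I))
        (fun h => hu (erase_subset y I h)) hyD.2
      rw [this, card_erase_of_mem hyD.1]
    have hunion : insert u (I \ D') ∪ insert u (I.erase y) = insert u I := by
      ext z
      simp only [mem_union, mem_insert, mem_sdiff, mem_erase]
      by_cases hzy : z = y
      · subst hzy; tauto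
      · tauto
    have hinter : insert u (I \ D') ∩ insert u (I.erase y) = insert u (I \ insert y D') := by
      ext z
      simp only [mem_inter, mem_insert, mem_sdiff, mem_erase]
      by_cases hzu : z = u <;> tauto
    have hsub := r_submod (M := M) hr (insert u (I \ D')) (insert u (I.erase y))
    rw [hunion, hinter, hA, hB, r_insert_dep hr hI hu hdep] at hsub
    have hge : I.card - (insert y D').card ≤ r (insert u (I \ insert y D')) := by
      have hind : M.Indep (I \ insert y D') := M.subset_closed hI sdiff_subset
      have : (I \ insert y D').card ≤ r (insert u (I \ insert y D')) := by
        rw [← r_indep hr hind]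
        exact r_mono hr (subset_insert _ _)
      rwa [card_sdiff_of_subset (insert_subset hyD.1 hD'I)] at this
    have hyI : y ∈ I := hyD.1
    have hcard : (insert y D').card = D'.card + 1 := card_insert_of_notMem hy
    have hDcard : D'.card < I.card := card_lt_card ⟨hD'I, fun h => hy (h hyI)⟩
    omega

/-- `v ∈ span (X)` provided `X` contains `u` and all `y ∈ I` (other than `v`)
for which the swap is independent. -/
theorem span_step {I X : Finset α} {u v : α} (hI : M.Indep I) (hu : u ∉ I)
    (hdep : ¬ M.Indep (insert u I)) (hv : v ∈ I)
    (hswap : M.Indep (insert u (I.erase v)))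
    (hX : ∀ y ∈ I, y ≠ v → M.Indep (insert u (I.erase y)) → y ∈ X)
    (huX : u ∈ X) : r (insert v X) = r X := by
  classical
  set D := I.filter (fun y => ¬ M.Indep (insert u (I.erase y))) with hD
  have hDspec : ∀ y ∈ D, y ∈ I ∧ ¬ M.Indep (insert u (I.erase y)) := by
    intro y hy; rw [hD, mem_filter] at hy; exact hy
  have hDI : D ⊆ I := fun y hy => (hDspec y hy).1
  have hvD : v ∉ D := by
    intro h; exact (hDspec v h).2 hswap
  set S : Finset α := insert u ((I \ D).erase v) with hS
  have hSX : S ⊆ X := by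
    intro z hz
    rw [hS, mem_insert] at hz
    rcases hz with rfl | hz
    · exact huX
    · rw [mem_erase, mem_sdiff] at hz
      refine hX z hz.2.1 hz.1 ?_
      by_contra hcon
      exact hz.2.2 (mem_filter.mpr ⟨hz.2.1, hcon⟩)
  have hSind : M.Indep S := by
    refine M.subset_closed hswap ?_
    rw [hS]
    intro z hz
    rw [mem_insert] at hz
    rcases hz with rfl | hz
    · exact mem_insert_self _ _
    · rw [mem_erase, mem_sdiff] at hz
      exact mem_insert_of_mem (mem_erase.mpr ⟨hz.1, hz.2.1⟩)
  have hvS : v ∉ S := by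
    rw [hS, mem_insert]
    push_neg
    exact ⟨fun h => hu (h ▸ hv), fun h => (mem_erase.mp h).1 rfl⟩
  have hScard : S.card = I.card - D.card := by
    rw [hS, card_insert_of_notMem, card_erase_of_mem (mem_sdiff.mpr ⟨hv, hvD⟩),
      card_sdiff_of_subset hDI]
    · have : D.card < I.card := card_lt_card ⟨hDI, fun h => hvD (h hv)⟩
      omega
    · intro h
      rw [mem_erase, mem_sdiff] at h
      exact hu h.2.1
  have hSv : insert v S = insert u (I \ D) := by
    rw [hS]
    ext z
    simp only [mem_insert, mem_erase, mem_sdiff]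
    constructor
    · rintro (rfl | h)
      · exact Or.inr ⟨hv, hvD⟩
      · tauto
    · rintro (rfl | h)
      · tauto
      · by_cases hzv : z = v <;> tauto
  have hkey : r (insert u (I \ D)) = I.card - D.card := key_erase hr hI hu hdep D hDspec
  have h1 : r S = I.card - D.card := by
    rw [r_indep hr hSind, hScard]
  -- span via the chain S ⊆ X : r (insert v S) = r S then span_mono
  have h2 : r (insert v S) = r S := by rw [hSv, hkey, h1]
  exact span_mono hr hSX h2

end Exchange

section Core
variable {α : Type*} [DecidableEq α] [Fintype α] {M : PaperMatroid α} {r : Finset α → ℕ}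
variable (hr : ∀ A I, M.MaxIndepIn A I → I.card = r A)
include hr

theorem exchange_rank {I : Finset α} (hI : M.Indep I) (F : Finset ℕ) (uu vv : ℕ → α)
    (hv : ∀ t ∈ F, vv t ∈ I) (hu : ∀ t ∈ F, uu t ∉ I)
    (hdep : ∀ t ∈ F, ¬ M.Indep (insert (uu t) I))
    (hswap : ∀ t ∈ F, M.Indep (insert (uu t) (I.erase (vv t))))
    (hvinj : ∀ t ∈ F, ∀ t' ∈ F, vv t = vv t' → t = t')
    (htri : ∀ t ∈ F, ∀ t' ∈ F, t < t' → ¬ M.Indep (insert (uu t) (I.erase (vv t')))) :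
    r ((I \ F.image vv) ∪ F.image uu) = I.card ∧
      r (((I \ F.image vv) ∪ F.image uu) ∪ I) = I.card := by
  classical
  set W := (I \ F.image vv) ∪ F.image uu with hW
  have claim1 : ∀ b : ℕ, r (W ∪ (F.filter (fun t => t < b)).image vv) = r W := by
    intro b
    induction b with
    | zero => simp
    | succ b ih =>
      by_cases hbF : b ∈ F
      · have hfilter : F.filter (fun t => t < b + 1) = insert b (F.filter (fun t => t < b)) := by
          ext t
          simp only [mem_filter, mem_insert]
          constructor
          · rintro ⟨h1, h2⟩
            rcases Nat.lt_succ_iff_lt_or_eq.mp h2 with h | h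
            · exact Or.inr ⟨h1, h⟩
            · exact Or.inl h
          · rintro (rfl | ⟨h1, h2⟩)
            · exact ⟨hbF, by omega⟩
            · exact ⟨h1, Nat.lt_succ_of_lt h2⟩
        rw [hfilter, image_insert, union_insert]
        rw [span_step hr hI (hu b hbF) (hdep b hbF) (hv b hbF) (hswap b hbF) ?_ ?_]
        · exact ih
        · intro y hyI hyne hyind
          by_cases hyV : y ∈ F.image vv
          · obtain ⟨t', ht'F, rfl⟩ := mem_image.mp hyV
            have ht'b : t' ≠ b := fun h => hyne (by rw [h])
            rcases lt_or_gt_of_ne ht'b with h | h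
            · exact mem_union_right _ (mem_image.mpr ⟨t', mem_filter.mpr ⟨ht'F, h⟩, rfl⟩)
            · exact absurd hyind (htri b hbF t' ht'F h)
          · exact mem_union_left _ (mem_union_left _ (mem_sdiff.mpr ⟨hyI, hyV⟩))
        · exact mem_union_left _ (mem_union_right _ (mem_image.mpr ⟨b, hbF, rfl⟩))
      · have hfilter : F.filter (fun t => t < b + 1) = F.filter (fun t => t < b) := by
          ext t
          simp only [mem_filter]
          constructor
          · rintro ⟨h1, h2⟩
            refine ⟨h1, ?_⟩
            rcases Nat.lt_succ_iff_lt_or_eq.mp h2 with h | rfl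
            · exact h
            · exact absurd h1 hbF
          · rintro ⟨h1, h2⟩
            exact ⟨h1, Nat.lt_succ_of_lt h2⟩
        rw [hfilter]
        exact ih
  have hfull : F.filter (fun t => t < F.sup id + 1) = F :=
    filter_true_of_mem (fun t ht => Nat.lt_succ_of_le (le_sup (f := id) ht))
  have claim2 : r (W ∪ F.image vv) = r W := by
    have := claim1 (F.sup id + 1)
    rwa [hfull] at this
  have hIsub : I ⊆ W ∪ F.image vv := by
    intro y hy
    by_cases hyV : y ∈ F.image vv
    · exact mem_union_right _ hyV
    · exact mem_union_left _ (mem_union_left _ (mem_sdiff.mpr ⟨hy, hyV⟩))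
  have hge : I.card ≤ r W := by
    rw [← claim2, ← r_indep hr hI]
    exact r_mono hr hIsub
  have hVsub : F.image vv ⊆ I := by
    intro y hy
    obtain ⟨t, htF, rfl⟩ := mem_image.mp hy
    exact hv t htF
  have hVcard : (F.image vv).card = F.card := card_image_of_injOn hvinj
  have hWcard : W.card ≤ I.card := by
    have h1 : (I \ F.image vv).card = I.card - F.card := by
      rw [card_sdiff_of_subset hVsub, hVcard]
    have h2 : (F.image uu).card ≤ F.card := card_image_le
    have h3 : F.card ≤ I.card := hVcard ▸ card_le_card hVsub
    calc W.card ≤ (I \ F.image vv).card + (F.image uu).card := card_union_le _ _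
      _ ≤ I.card := by omega
  have hle : r W ≤ I.card := (r_le_card hr W).trans hWcard
  have hrW : r W = I.card := le_antisymm hle hge
  refine ⟨hrW, le_antisymm ?_ ?_⟩
  · have : W ∪ I ⊆ W ∪ F.image vv := union_subset subset_union_left hIsub
    exact le_trans (r_mono hr this) (le_of_eq (claim2.trans hrW))
  · rw [← hrW]
    exact r_mono hr subset_union_left

omit [Fintype α] hr in
theorem exchange_card {I : Finset α} (F : Finset ℕ) (uu vv : ℕ → α)
    (hv : ∀ t ∈ F, vv t ∈ I) (hu : ∀ t ∈ F, uu t ∉ I)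
    (hvinj : ∀ t ∈ F, ∀ t' ∈ F, vv t = vv t' → t = t')
    (huinj : ∀ t ∈ F, ∀ t' ∈ F, uu t = uu t' → t = t') :
    ((I \ F.image vv) ∪ F.image uu).card = I.card := by
  classical
  have hVsub : F.image vv ⊆ I := by
    intro y hy; obtain ⟨t, htF, rfl⟩ := mem_image.mp hy; exact hv t htF
  have hdis : Disjoint (I \ F.image vv) (F.image uu) := by
    rw [disjoint_right]
    intro y hy hy2
    obtain ⟨t, htF, rfl⟩ := mem_image.mp hy
    exact hu t htF (mem_sdiff.mp hy2).1
  rw [card_union_of_disjoint hdis, card_sdiff_of_subset hVsub,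
    card_image_of_injOn hvinj, card_image_of_injOn huinj]
  have : F.card ≤ I.card := by
    rw [← card_image_of_injOn hvinj]; exact card_le_card hVsub
  omega

theorem exchange_indep {I : Finset α} (hI : M.Indep I) (F : Finset ℕ) (uu vv : ℕ → α)
    (hv : ∀ t ∈ F, vv t ∈ I) (hu : ∀ t ∈ F, uu t ∉ I)
    (hdep : ∀ t ∈ F, ¬ M.Indep (insert (uu t) I))
    (hswap : ∀ t ∈ F, M.Indep (insert (uu t) (I.erase (vv t))))
    (hvinj : ∀ t ∈ F, ∀ t' ∈ F, vv t = vv t' → t = t')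
    (huinj : ∀ t ∈ F, ∀ t' ∈ F, uu t = uu t' → t = t')
    (htri : ∀ t ∈ F, ∀ t' ∈ F, t < t' → ¬ M.Indep (insert (uu t) (I.erase (vv t')))) :
    M.Indep ((I \ F.image vv) ∪ F.image uu) := by
  refine indep_of_r_eq_card hr ?_
  rw [(exchange_rank hr hI F uu vv hv hu hdep hswap hvinj htri).1,
    exchange_card F uu vv hv hu hvinj huinj]

theorem exchange_insert_indep {I : Finset α} (hI : M.Indep I) (F : Finset ℕ) (uu vv : ℕ → α)
    (hv : ∀ t ∈ F, vv t ∈ I) (hu : ∀ t ∈ F, uu t ∉ I)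
    (hdep : ∀ t ∈ F, ¬ M.Indep (insert (uu t) I))
    (hswap : ∀ t ∈ F, M.Indep (insert (uu t) (I.erase (vv t))))
    (hvinj : ∀ t ∈ F, ∀ t' ∈ F, vv t = vv t' → t = t')
    (huinj : ∀ t ∈ F, ∀ t' ∈ F, uu t = uu t' → t = t')
    (htri : ∀ t ∈ F, ∀ t' ∈ F, t < t' → ¬ M.Indep (insert (uu t) (I.erase (vv t'))))
    {z : α} (hzI : z ∉ I) (hzind : M.Indep (insert z I)) (hzU : z ∉ F.image uu) :
    M.Indep (insert z ((I \ F.image vv) ∪ F.image uu)) := by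
  classical
  set W := (I \ F.image vv) ∪ F.image uu with hWdef
  obtain ⟨hrW, hrWI⟩ := exchange_rank hr hI F uu vv hv hu hdep hswap hvinj htri
  have hzW : z ∉ W := by
    rw [hWdef, mem_union, mem_sdiff]
    push_neg
    exact ⟨fun h => absurd h hzI, hzU⟩
  have hWcard : W.card = I.card := exchange_card F uu vv hv hu hvinj huinj
  have hcase : r (insert z W) = r W ∨ r (insert z W) = r W + 1 := by
    have h1 := r_mono (M := M) hr (subset_insert z W)
    have h2 := r_insert_le (M := M) hr W z
    omega
  rcases hcase with h | h
  · exfalso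
    have hspan : r (insert z (W ∪ I)) = r (W ∪ I) :=
      span_mono hr subset_union_left h
    have hgt : I.card + 1 ≤ r (insert z (W ∪ I)) := by
      have hsub : insert z I ⊆ insert z (W ∪ I) := insert_subset_insert z subset_union_right
      have := r_mono (M := M) hr hsub
      rw [r_indep hr hzind, card_insert_of_notMem hzI] at this
      omega
    rw [hspan, hrWI] at hgt
    omega
  · refine indep_of_r_eq_card hr ?_
    rw [card_insert_of_notMem hzW, h, hrW, hWcard]

end Core

section AL
variable {α : Type*} [DecidableEq α] [Fintype α] {m : ℕ}

/-- number of sets of the family containing `a`. -/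
def cntF (I : Fin m → Finset α) : α → ℕ := fun a => ∑ p, if a ∈ I p then 1 else 0

/-- exchange digraph arc. -/
def arcRel (M : PaperMatroid α) (I : Fin m → Finset α) (x y : α) : Prop :=
  ∃ p, x ∉ I p ∧ y ∈ I p ∧ M.Indep (insert x ((I p).erase y))

/-- `x` can be inserted into some member of the family. -/
def freeAt (M : PaperMatroid α) (I : Fin m → Finset α) (x : α) : Prop :=
  ∃ p, x ∉ I p ∧ M.Indep (insert x (I p))

/-- an augmenting path from `a` of length `s`. -/
def IsPathTo (M : PaperMatroid α) (I : Fin m → Finset α) (a : α) (s : ℕ) (x : ℕ → α) : Prop :=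
  x 0 = a ∧ (∀ t, t < s → arcRel M I (x t) (x (t + 1))) ∧ freeAt M I (x s)

variable {M : PaperMatroid α} {r : Finset α → ℕ}

theorem exists_path {I : Fin m → Finset α} {a : α}
    (h : ∃ w, Relation.ReflTransGen (arcRel M I) a w ∧ freeAt M I w) :
    ∃ s x, IsPathTo M I a s x := by
  obtain ⟨w, hRTG, hfree⟩ := h
  induction hRTG using Relation.ReflTransGen.head_induction_on with
  | refl => exact ⟨0, fun _ => w, rfl, fun t ht => absurd ht (Nat.not_lt_zero t), hfree⟩
  | head harc _ ih =>
    obtain ⟨s, x, hx0, harcs, hfree'⟩ := ih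
    refine ⟨s + 1, fun t => if t = 0 then _ else x (t - 1), rfl, ?_, ?_⟩
    · intro t ht
      rcases Nat.eq_zero_or_pos t with rfl | htpos
      · simpa [hx0] using harc
      · have h1 : t ≠ 0 := htpos.ne'
        have h2 : t + 1 ≠ 0 := (Nat.succ_ne_zero t)
        simp only [h1, h2, if_false]
        have he : t - 1 + 1 = t := Nat.succ_pred_eq_of_pos htpos
        have h3 := harcs (t - 1) (by omega)
        rwa [he] at h3
    · simpa using hfree'

omit [Fintype α] in
theorem sum_cntF_eq {I : Fin m → Finset α} (A : Finset α) :
    ∑ b ∈ A, cntF I b = ∑ p, ((I p) ∩ A).card := by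
  unfold cntF
  rw [Finset.sum_comm]
  refine Finset.sum_congr rfl fun p _ => ?_
  have h : (I p ∩ A) = A.filter (fun b => b ∈ I p) := by
    ext b; simp [mem_inter, mem_filter, and_comm]
  rw [h, card_filter]

/-- If no augmenting path from `a` exists, the non-reachable set is tight. -/
theorem tight_of_no_path {I : Fin m → Finset α} {a : α}
    (hr : ∀ A I, M.MaxIndepIn A I → I.card = r A)
    (hGood : ∀ p, M.Indep (I p))
    (hnr : ¬ ∃ w, Relation.ReflTransGen (arcRel M I) a w ∧ freeAt M I w) :
    ∃ A : Finset α, a ∈ A ∧ ∑ b ∈ A, cntF I b = m * r A := by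
  classical
  set Reach : α → Prop := fun y => ∃ w, Relation.ReflTransGen (arcRel M I) y w ∧ freeAt M I w
    with hReach
  set A : Finset α := Finset.univ.filter (fun y => ¬ Reach y) with hA
  have haA : a ∈ A := by simp [hA, hReach]; exact fun w h1 h2 => hnr ⟨w, h1, h2⟩
  refine ⟨A, haA, ?_⟩
  have hmax : ∀ p, M.MaxIndepIn A (I p ∩ A) := by
    intro p
    refine ⟨inter_subset_right, M.subset_closed (hGood p) inter_subset_left, ?_⟩
    intro K hKA hK hIK
    by_contra hne
    obtain ⟨z, hzK, hznotin⟩ := exists_of_ssubset (ssubset_of_subset_of_ne hIK (Ne.symm hne))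
    have hzA : z ∈ A := hKA hzK
    have hznR : ¬ Reach z := by
      rw [hA, mem_filter] at hzA
      exact hzA.2
    have hzIp : z ∉ I p := fun h => hznotin (mem_inter.mpr ⟨h, hzA⟩)
    have hzins : M.Indep (insert z (I p ∩ A)) :=
      M.subset_closed hK (insert_subset hzK hIK)
    by_cases hfz : M.Indep (insert z (I p))
    · exact hznR ⟨z, Relation.ReflTransGen.refl, p, hzIp, hfz⟩
    · -- extend insert z (I p ∩ A) to a maximal independent set in insert z (I p)
      obtain ⟨K', hK', hK'sup⟩ := exists_maxIndepIn_superset M hzins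
        (insert_subset_insert z inter_subset_left)
      have hIpmax : M.MaxIndepIn (insert z (I p)) (I p) := by
        refine ⟨subset_insert _ _, hGood p, ?_⟩
        intro J hJA hJ hIJ
        by_cases hzJ : z ∈ J
        · exact absurd ((Subset.antisymm hJA (insert_subset hzJ hIJ)) ▸ hJ) hfz
        · exact Subset.antisymm (fun y hy => (mem_insert.mp (hJA hy)).resolve_left
            (fun h => hzJ (h ▸ hy))) hIJ
      have hcard : K'.card = (I p).card := by
        rw [hr _ _ hK', hr _ _ hIpmax]
      have hzK' : z ∈ K' := hK'sup (mem_insert_self _ _)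
      -- K' = insert z ((I p).erase y) for some y ∈ I p \ K'
      have hKsub : K' ⊆ insert z (I p) := hK'.1
      have hKne : K' ≠ I p := fun h => hzIp (h ▸ hzK')
      obtain ⟨y, hyIp, hyK'⟩ : ∃ y, y ∈ I p ∧ y ∉ K' := by
        by_contra hcon
        push_neg at hcon
        have : insert z (I p) ⊆ K' := insert_subset hzK' hcon
        have : K' = insert z (I p) := Subset.antisymm hKsub this
        exact hfz (this ▸ hK'.2.1)
      have hyA : y ∉ A := by
        intro hyA
        exact hyK' (hK'sup (mem_insert_of_mem (mem_inter.mpr ⟨hyIp, hyA⟩)))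
      have hyR : Reach y := by
        rw [hA, mem_filter] at hyA
        push_neg at hyA
        exact hyA (mem_univ y)
      have hK'eq : K' = insert z ((I p).erase y) := by
        apply eq_of_subset_of_card_le
        · intro w hw
          rcases mem_insert.mp (hKsub hw) with rfl | hwIp
          · exact mem_insert_self _ _
          · refine mem_insert_of_mem (mem_erase.mpr ⟨?_, hwIp⟩)
            rintro rfl
            exact hyK' hw
        · rw [card_insert_of_notMem (fun h => hzIp (erase_subset _ _ h)),
            card_erase_of_mem hyIp, hcard]
          have : 0 < (I p).card := card_pos.mpr ⟨y, hyIp⟩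
          omega
      have harc : arcRel M I z y := ⟨p, hzIp, hyIp, hK'eq ▸ hK'.2.1⟩
      obtain ⟨w, hw1, hw2⟩ := hyR
      exact hznR ⟨w, Relation.ReflTransGen.head harc hw1, hw2⟩
  calc ∑ b ∈ A, cntF I b = ∑ p, ((I p) ∩ A).card := sum_cntF_eq A
    _ = ∑ _p : Fin m, r A := Finset.sum_congr rfl fun p _ => hr A _ (hmax p)
    _ = m * r A := by rw [Finset.sum_const, card_univ, Fintype.card_fin, smul_eq_mul]

end AL

section AL2
variable {α : Type*} [DecidableEq α] [Fintype α] {m : ℕ} {M : PaperMatroid α} {r : Finset α → ℕ}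

theorem sum_update_one (f g : Fin m → ℕ) (p₁ : Fin m)
    (h : ∀ p, p ≠ p₁ → f p = g p) : (∑ p, f p) + g p₁ = (∑ p, g p) + f p₁ := by
  classical
  have e1 := Finset.sum_eq_sum_sdiff_singleton_add (Finset.mem_univ p₁) f
  have e2 := Finset.sum_eq_sum_sdiff_singleton_add (Finset.mem_univ p₁) g
  have e3 : ∑ p ∈ Finset.univ \ {p₁}, f p = ∑ p ∈ Finset.univ \ {p₁}, g p :=
    Finset.sum_congr rfl (fun p hp => h p (by simpa using (Finset.mem_sdiff.mp hp).2))
  omega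

theorem sum_update_two (f g : Fin m → ℕ) (p₁ p₂ : Fin m) (hne : p₁ ≠ p₂)
    (h : ∀ p, p ≠ p₁ → p ≠ p₂ → f p = g p) :
    (∑ p, f p) + g p₁ + g p₂ = (∑ p, g p) + f p₁ + f p₂ := by
  classical
  have h2 : p₂ ∈ Finset.univ \ ({p₁} : Finset (Fin m)) := by simp [hne.symm]
  have e1 := Finset.sum_eq_sum_sdiff_singleton_add (Finset.mem_univ p₁) f
  have e2 := Finset.sum_eq_sum_sdiff_singleton_add (Finset.mem_univ p₁) g
  have e3 := Finset.sum_eq_sum_sdiff_singleton_add h2 f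
  have e4 := Finset.sum_eq_sum_sdiff_singleton_add h2 g
  have e5 : ∑ p ∈ (Finset.univ \ {p₁}) \ {p₂}, f p = ∑ p ∈ (Finset.univ \ {p₁}) \ {p₂}, g p :=
    Finset.sum_congr rfl (fun p hp => h p
      (by simpa using (Finset.mem_sdiff.mp (Finset.mem_sdiff.mp hp).1).2)
      (by simpa using (Finset.mem_sdiff.mp hp).2))
  omega

theorem augment_of_path {I : Fin m → Finset α} {a : α}
    (hr : ∀ A I, M.MaxIndepIn A I → I.card = r A)
    (hGood : ∀ p, M.Indep (I p))
    (hpath : ∃ s x, IsPathTo M I a s x) :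
    ∃ I' : Fin m → Finset α, (∀ p, M.Indep (I' p)) ∧
      ∀ b, cntF I' b = cntF I b + (if b = a then 1 else 0) := by
  classical
  have hQ : ∃ s, ∃ x, IsPathTo M I a s x := hpath
  set s₀ := Nat.find hQ with hs₀
  obtain ⟨x, hx0, harcs, hfreeS⟩ := Nat.find_spec hQ
  rw [← hs₀] at harcs hfreeS
  have hmin : ∀ s', s' < s₀ → ¬ ∃ x, IsPathTo M I a s' x := fun s' h => Nat.find_min hQ h
  -- no earlier vertex is free
  have hnofree : ∀ t, t < s₀ → ¬ freeAt M I (x t) := by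
    intro t ht hf
    exact hmin t ht ⟨x, hx0, fun t' ht' => harcs t' (by omega), hf⟩
  -- no shortcuts
  have hcut : ∀ t t', t + 1 < t' → t' ≤ s₀ → ¬ arcRel M I (x t) (x t') := by
    intro t t' h1 h2 harc
    set d := t' - t - 1 with hd
    have hd1 : 1 ≤ d := by omega
    apply hmin (s₀ - d) (by omega)
    refine ⟨fun i => if i ≤ t then x i else x (i + d), by simp [Nat.zero_le, hx0], ?_, ?_⟩
    · intro i hi
      rcases lt_trichotomy i t with hit | rfl | hit
      · have e1 : i ≤ t := le_of_lt hit
        have e2 : i + 1 ≤ t := hit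
        simp only [e1, e2, if_pos]
        exact harcs i (by omega)
      · have e1 : i ≤ i := le_refl i
        have e2 : ¬ (i + 1 ≤ i) := by omega
        simp only [if_pos e1, if_neg e2]
        have : i + 1 + d = t' := by omega
        rw [this]
        exact harc
      · have e1 : ¬ (i ≤ t) := by omega
        have e2 : ¬ (i + 1 ≤ t) := by omega
        simp only [if_neg e1, if_neg e2]
        have e3 : i + 1 + d = i + d + 1 := by omega
        rw [e3]
        exact harcs (i + d) (by omega)
    · have e1 : ¬ (s₀ - d ≤ t) ∨ (s₀ - d = t ∧ t' = s₀) := by omega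
      rcases e1 with e1 | ⟨e1, e2⟩
      · have : s₀ - d + d = s₀ := by omega
        simp only [if_neg (by omega : ¬ (s₀ - d ≤ t))]
        rw [this]
        exact hfreeS
      · exfalso
        omega
  -- injectivity
  have hinj : ∀ i, i ≤ s₀ → ∀ j, j ≤ s₀ → x i = x j → i = j := by
    have key : ∀ i j, i < j → j ≤ s₀ → x i = x j → False := by
      intro i j hij hj heq
      rcases eq_or_lt_of_le hj with rfl | hj'
      · exact hnofree i (by omega) (heq ▸ hfreeS)
      · have harc := harcs j hj'
        rw [← heq] at harc
        exact hcut i (j + 1) (by omega) (by omega) harc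
    intro i hi j hj heq
    rcases lt_trichotomy i j with h | h | h
    · exact absurd (key i j h hj heq) (fun h => h)
    · exact h
    · exact absurd (key j i h hi heq.symm) (fun h => h)
  -- witnesses
  obtain ⟨qf, hqf1, hqf2⟩ := hfreeS
  have harcsW : ∀ t, t < s₀ → ∃ p : Fin m, x t ∉ I p ∧ x (t + 1) ∈ I p ∧
      M.Indep (insert (x t) ((I p).erase (x (t + 1)))) := fun t ht => harcs t ht
  choose qd hq1' hq2' hq3' using harcsW
  set q : ℕ → Fin m := fun t => if h : t < s₀ then qd t h else qf with hqdef
  have hq1 : ∀ t, t < s₀ → x t ∉ I (q t) := by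
    intro t ht; simp only [hqdef, dif_pos ht]; exact hq1' t ht
  have hq2 : ∀ t, t < s₀ → x (t + 1) ∈ I (q t) := by
    intro t ht; simp only [hqdef, dif_pos ht]; exact hq2' t ht
  have hq3 : ∀ t, t < s₀ → M.Indep (insert (x t) ((I (q t)).erase (x (t + 1)))) := by
    intro t ht; simp only [hqdef, dif_pos ht]; exact hq3' t ht
  -- the swap family
  set Tp : Fin m → Finset ℕ := fun p => (Finset.range s₀).filter (fun t => q t = p) with hTp
  have hTpmem : ∀ p t, t ∈ Tp p ↔ (t < s₀ ∧ q t = p) := by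
    intro p t; simp [hTp]
  set bse : Fin m → Finset α :=
    fun p => (I p \ (Tp p).image (fun t => x (t + 1))) ∪ (Tp p).image x with hbse
  set I' : Fin m → Finset α := fun p => if p = qf then insert (x s₀) (bse p) else bse p
    with hI'
  -- independence
  have hindep : ∀ p, M.Indep (I' p) := by
    intro p
    have hv : ∀ t ∈ Tp p, x (t + 1) ∈ I p := by
      intro t ht; obtain ⟨ht1, ht2⟩ := (hTpmem p t).mp ht; exact ht2 ▸ hq2 t ht1
    have hu : ∀ t ∈ Tp p, x t ∉ I p := by
      intro t ht; obtain ⟨ht1, ht2⟩ := (hTpmem p t).mp ht; exact ht2 ▸ hq1 t ht1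
    have hdep : ∀ t ∈ Tp p, ¬ M.Indep (insert (x t) (I p)) := by
      intro t ht hcon
      obtain ⟨ht1, ht2⟩ := (hTpmem p t).mp ht
      exact hnofree t ht1 ⟨p, ht2 ▸ hq1 t ht1, hcon⟩
    have hswap : ∀ t ∈ Tp p, M.Indep (insert (x t) ((I p).erase (x (t + 1)))) := by
      intro t ht; obtain ⟨ht1, ht2⟩ := (hTpmem p t).mp ht; exact ht2 ▸ hq3 t ht1
    have hvinj : ∀ t ∈ Tp p, ∀ t' ∈ Tp p, x (t + 1) = x (t' + 1) → t = t' := by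
      intro t ht t' ht' heq
      have h1 := ((hTpmem p t).mp ht).1
      have h2 := ((hTpmem p t').mp ht').1
      have := hinj (t + 1) (by omega) (t' + 1) (by omega) heq
      omega
    have huinj : ∀ t ∈ Tp p, ∀ t' ∈ Tp p, x t = x t' → t = t' := by
      intro t ht t' ht' heq
      have h1 := ((hTpmem p t).mp ht).1
      have h2 := ((hTpmem p t').mp ht').1
      exact hinj t (by omega) t' (by omega) heq
    have htri : ∀ t ∈ Tp p, ∀ t' ∈ Tp p, t < t' →
        ¬ M.Indep (insert (x t) ((I p).erase (x (t' + 1)))) := by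
      intro t ht t' ht' hlt hcon
      have h1 := (hTpmem p t).mp ht
      have h2 := (hTpmem p t').mp ht'
      exact hcut t (t' + 1) (by omega) (by omega)
        ⟨p, h1.2 ▸ hq1 t h1.1, hv t' ht', hcon⟩
    by_cases hpqf : p = qf
    · subst hpqf
      have : I' p = insert (x s₀) ((I p \ (Tp p).image (fun t => x (t + 1))) ∪ (Tp p).image x) := by
        simp [hI', hbse]
      rw [this]
      refine exchange_insert_indep hr (hGood p) (Tp p) x (fun t => x (t + 1))
        hv hu hdep hswap hvinj huinj htri hqf1 hqf2 ?_
      intro hcon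
      obtain ⟨t, htT, hteq⟩ := Finset.mem_image.mp hcon
      have h1 := ((hTpmem p t).mp htT).1
      have := hinj t (by omega) s₀ (le_refl s₀) hteq
      omega
    · have : I' p = (I p \ (Tp p).image (fun t => x (t + 1))) ∪ (Tp p).image x := by
        simp [hI', hbse, hpqf]
      rw [this]
      exact exchange_indep hr (hGood p) (Tp p) x (fun t => x (t + 1))
        hv hu hdep hswap hvinj huinj htri
  refine ⟨I', hindep, ?_⟩
  intro b
  show (∑ p, if b ∈ I' p then 1 else 0) = (∑ p, if b ∈ I p then 1 else 0) + (if b = a then 1 else 0)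
  have hmem : ∀ p, b ∈ I' p ↔ ((p = qf ∧ b = x s₀) ∨
      (b ∈ I p ∧ ¬ ∃ t, t ∈ Tp p ∧ x (t + 1) = b) ∨ (∃ t, t ∈ Tp p ∧ x t = b)) := by
    intro p
    by_cases hpq : p = qf
    · subst hpq
      simp only [hI', hbse, if_pos rfl, Finset.mem_insert, Finset.mem_union, Finset.mem_sdiff,
        Finset.mem_image]
      tauto
    · simp only [hI', hbse, if_neg hpq, Finset.mem_union, Finset.mem_sdiff, Finset.mem_image]
      tauto
  by_cases hbx : ∃ j, j ≤ s₀ ∧ x j = b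
  · obtain ⟨j, hj, hbj⟩ := hbx
    subst hbj
    have hite : (if x j = a then 1 else 0 : ℕ) = if j = 0 then 1 else 0 := by
      by_cases hj0 : j = 0
      · subst hj0; simp [hx0]
      · have hne : x j ≠ a := fun h => hj0 (hinj j hj 0 (Nat.zero_le s₀) (h.trans hx0.symm))
        simp [hne, hj0]
    rw [hite]
    have hins : ∀ p, (∃ t, t ∈ Tp p ∧ x t = x j) ↔ (j < s₀ ∧ q j = p) := by
      intro p
      constructor
      · rintro ⟨t, ht, he⟩
        have h1 := (hTpmem p t).mp ht
        have h2 := hinj t (by omega) j hj he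
        subst h2
        exact h1
      · rintro ⟨h1, h2⟩
        exact ⟨j, (hTpmem p j).mpr ⟨h1, h2⟩, rfl⟩
    have houts : ∀ p, (∃ t, t ∈ Tp p ∧ x (t + 1) = x j) ↔ (1 ≤ j ∧ q (j - 1) = p) := by
      intro p
      constructor
      · rintro ⟨t, ht, he⟩
        have h1 := (hTpmem p t).mp ht
        have h2 := hinj (t + 1) (by omega) j hj he
        have h3 : j - 1 = t := by omega
        exact ⟨by omega, h3 ▸ h1.2⟩
      · rintro ⟨h1, h2⟩
        refine ⟨j - 1, (hTpmem p (j - 1)).mpr ⟨by omega, h2⟩, ?_⟩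
        have h4 : j - 1 + 1 = j := by omega
        rw [h4]
    have hxjs : ∀ j', j' ≤ s₀ → (x j' = x s₀ ↔ j' = s₀) := by
      intro j' hj'
      exact ⟨fun h => hinj j' hj' s₀ le_rfl h, fun h => h ▸ rfl⟩
    by_cases hj0 : j = 0
    · subst hj0
      by_cases hs00 : s₀ = 0
      · have key : (∑ p, if x 0 ∈ I' p then (1:ℕ) else 0) + (if x 0 ∈ I qf then (1:ℕ) else 0)
            = (∑ p, if x 0 ∈ I p then (1:ℕ) else 0) + (if x 0 ∈ I' qf then (1:ℕ) else 0) :=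
          sum_update_one (fun p => if x 0 ∈ I' p then (1:ℕ) else 0) (fun p => if x 0 ∈ I p then (1:ℕ) else 0) qf ?_
        · have e1 : x 0 ∈ I' qf := (hmem qf).mpr (Or.inl ⟨rfl, by rw [hs00]⟩)
          have e2 : x 0 ∉ I qf := by rw [hs00] at hqf1; exact hqf1
          rw [if_pos e1, if_neg e2] at key
          rw [if_pos rfl]
          omega
        · intro p hp
          have e3 : x 0 ∈ I' p ↔ x 0 ∈ I p := by
            rw [hmem p]
            constructor
            · rintro (⟨h1, h2⟩ | ⟨h1, h2⟩ | ⟨t, ht, he⟩)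
              · exact absurd h1 hp
              · exact h1
              · have := ((hTpmem p t).mp ht).1; omega
            · intro h
              refine Or.inr (Or.inl ⟨h, ?_⟩)
              rintro ⟨t, ht, he⟩
              have := ((hTpmem p t).mp ht).1; omega
          simp only [e3]
      · have hs0pos : 0 < s₀ := by omega
        have key : (∑ p, if x 0 ∈ I' p then (1:ℕ) else 0) + (if x 0 ∈ I (q 0) then (1:ℕ) else 0)
            = (∑ p, if x 0 ∈ I p then (1:ℕ) else 0) + (if x 0 ∈ I' (q 0) then (1:ℕ) else 0) :=
          sum_update_one (fun p => if x 0 ∈ I' p then (1:ℕ) else 0) (fun p => if x 0 ∈ I p then (1:ℕ) else 0) (q 0) ?_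
        · have e1 : x 0 ∈ I' (q 0) :=
            (hmem (q 0)).mpr (Or.inr (Or.inr ((hins (q 0)).mpr ⟨hs0pos, rfl⟩)))
          have e2 : x 0 ∉ I (q 0) := hq1 0 hs0pos
          rw [if_pos e1, if_neg e2] at key
          rw [if_pos rfl]
          omega
        · intro p hp
          have e3 : x 0 ∈ I' p ↔ x 0 ∈ I p := by
            rw [hmem p]
            constructor
            · rintro (⟨h1, h2⟩ | ⟨h1, h2⟩ | h)
              · rw [hxjs 0 (by omega)] at h2; omega
              · exact h1
              · rw [hins p] at h; exact absurd h.2.symm hp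
            · intro h
              refine Or.inr (Or.inl ⟨h, ?_⟩)
              rw [houts p]
              rintro ⟨h1, h2⟩; omega
          simp only [e3]
    · simp only [if_neg hj0]
      by_cases hjs : j = s₀
      · have hp2 : x j ∈ I (q (j - 1)) := by
          have h1 := hq2 (j - 1) (by omega)
          have h2 : j - 1 + 1 = j := by omega
          rwa [h2] at h1
        have hp2qf : qf ≠ q (j - 1) := by
          intro h
          rw [← h] at hp2
          rw [← hjs] at hqf1
          exact hqf1 hp2
        have key : (∑ p, if x j ∈ I' p then (1:ℕ) else 0)
              + (if x j ∈ I qf then (1:ℕ) else 0) + (if x j ∈ I (q (j - 1)) then (1:ℕ) else 0)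
            = (∑ p, if x j ∈ I p then (1:ℕ) else 0)
              + (if x j ∈ I' qf then (1:ℕ) else 0) + (if x j ∈ I' (q (j - 1)) then (1:ℕ) else 0) :=
          sum_update_two (fun p => if x j ∈ I' p then (1:ℕ) else 0) (fun p => if x j ∈ I p then (1:ℕ) else 0) qf (q (j - 1)) hp2qf ?_
        · have e1 : x j ∈ I' qf := (hmem qf).mpr (Or.inl ⟨rfl, by rw [hjs]⟩)
          have e2 : x j ∉ I qf := by rw [← hjs] at hqf1; exact hqf1
          have e3 : x j ∉ I' (q (j - 1)) := by
            rw [hmem (q (j - 1))]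
            rintro (⟨h1, h2⟩ | ⟨h1, h2⟩ | h)
            · exact hp2qf h1.symm
            · exact h2 ((houts (q (j - 1))).mpr ⟨by omega, rfl⟩)
            · rw [hins (q (j - 1))] at h; omega
          rw [if_pos e1, if_neg e2, if_neg e3, if_pos hp2] at key
          omega
        · intro p hp1 hp2'
          have e3 : x j ∈ I' p ↔ x j ∈ I p := by
            rw [hmem p]
            constructor
            · rintro (⟨h1, h2⟩ | ⟨h1, h2⟩ | h)
              · exact absurd h1 hp1
              · exact h1
              · rw [hins p] at h; omega
            · intro h
              refine Or.inr (Or.inl ⟨h, ?_⟩)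
              rw [houts p]
              rintro ⟨h1, h2⟩
              exact hp2' h2.symm
          simp only [e3]
      · have hjlt : j < s₀ := by omega
        have hp1 : x j ∉ I (q j) := hq1 j hjlt
        have hp2 : x j ∈ I (q (j - 1)) := by
          have h1 := hq2 (j - 1) (by omega)
          have h2 : j - 1 + 1 = j := by omega
          rwa [h2] at h1
        have hpne : q j ≠ q (j - 1) := fun h => hp1 (h ▸ hp2)
        have key : (∑ p, if x j ∈ I' p then (1:ℕ) else 0)
              + (if x j ∈ I (q j) then (1:ℕ) else 0) + (if x j ∈ I (q (j - 1)) then (1:ℕ) else 0)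
            = (∑ p, if x j ∈ I p then (1:ℕ) else 0)
              + (if x j ∈ I' (q j) then (1:ℕ) else 0) + (if x j ∈ I' (q (j - 1)) then (1:ℕ) else 0) :=
          sum_update_two (fun p => if x j ∈ I' p then (1:ℕ) else 0) (fun p => if x j ∈ I p then (1:ℕ) else 0) (q j) (q (j - 1)) hpne ?_
        · have e1 : x j ∈ I' (q j) :=
            (hmem (q j)).mpr (Or.inr (Or.inr ((hins (q j)).mpr ⟨hjlt, rfl⟩)))
          have e2 : x j ∉ I' (q (j - 1)) := by
            rw [hmem (q (j - 1))]
            rintro (⟨h1, h2⟩ | ⟨h1, h2⟩ | h)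
            · rw [hxjs j hj] at h2; omega
            · exact h2 ((houts (q (j - 1))).mpr ⟨by omega, rfl⟩)
            · rw [hins (q (j - 1))] at h
              exact hpne (h.2 ▸ rfl)
          rw [if_pos e1, if_neg e2, if_neg hp1, if_pos hp2] at key
          omega
        · intro p hpa hpb
          have e3 : x j ∈ I' p ↔ x j ∈ I p := by
            rw [hmem p]
            constructor
            · rintro (⟨h1, h2⟩ | ⟨h1, h2⟩ | h)
              · rw [hxjs j hj] at h2; omega
              · exact h1
              · rw [hins p] at h; exact absurd h.2.symm hpa
            · intro h
              refine Or.inr (Or.inl ⟨h, ?_⟩)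
              rw [houts p]
              rintro ⟨h1, h2⟩
              exact hpb h2.symm
          simp only [e3]
  · -- b is not on the path at all
    push_neg at hbx
    have hba : b ≠ a := by
      intro h
      exact hbx 0 (Nat.zero_le s₀) (by rw [hx0, h])
    have e3 : ∀ p, (b ∈ I' p ↔ b ∈ I p) := by
      intro p
      rw [hmem p]
      constructor
      · rintro (⟨h1, h2⟩ | ⟨h1, h2⟩ | ⟨t, ht, he⟩)
        · exact absurd h2.symm (hbx s₀ le_rfl)
        · exact h1
        · have := ((hTpmem p t).mp ht).1
          exact absurd he (hbx t (by omega))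
      · intro h
        refine Or.inr (Or.inl ⟨h, ?_⟩)
        rintro ⟨t, ht, he⟩
        have := ((hTpmem p t).mp ht).1
        exact hbx (t + 1) (by omega) he
    simp only [e3, if_neg hba]
    omega

end AL2

section PT
variable {α : Type*} [DecidableEq α] [Fintype α] {m : ℕ} {M : PaperMatroid α} {r : Finset α → ℕ}

theorem augment_lemma {I : Fin m → Finset α} {a : α}
    (hr : ∀ A I, M.MaxIndepIn A I → I.card = r A)
    (hGood : ∀ p, M.Indep (I p))
    (hlt : ∀ A : Finset α, a ∈ A → ∑ b ∈ A, cntF I b < m * r A) :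
    ∃ I' : Fin m → Finset α, (∀ p, M.Indep (I' p)) ∧
      ∀ b, cntF I' b = cntF I b + (if b = a then 1 else 0) := by
  classical
  by_cases hreach : ∃ w, Relation.ReflTransGen (arcRel M I) a w ∧ freeAt M I w
  · exact augment_of_path hr hGood (exists_path hreach)
  · obtain ⟨A, haA, hA⟩ := tight_of_no_path hr hGood hreach
    have := hlt A haA
    omega

theorem partition_theorem
    (hr : ∀ A I, M.MaxIndepIn A I → I.card = r A)
    (X : α → ℕ) (hXle : ∀ a, X a ≤ m) (hXA : ∀ A : Finset α, ∑ a ∈ A, X a ≤ m * r A) :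
    ∃ I : Fin m → Finset α, (∀ p, M.Indep (I p)) ∧ ∀ b, cntF I b = X b := by
  classical
  suffices h : ∀ (N : ℕ) (X : α → ℕ), (∑ a, X a) = N → (∀ a, X a ≤ m) →
      (∀ A : Finset α, ∑ a ∈ A, X a ≤ m * r A) →
      ∃ I : Fin m → Finset α, (∀ p, M.Indep (I p)) ∧ ∀ b, cntF I b = X b by
    exact h (∑ a, X a) X rfl hXle hXA
  intro N
  induction N with
  | zero =>
    intro X hN hle hA
    have hX0 : ∀ a, X a = 0 := fun a =>
      (Finset.sum_eq_zero_iff.mp hN) a (Finset.mem_univ a)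
    exact ⟨fun _ => ∅, fun p => M_empty_indep M, fun b => by simp [cntF, hX0]⟩
  | succ N ih =>
    intro X hN hle hA
    have hex : ∃ a, 0 < X a := by
      by_contra hcon
      push_neg at hcon
      have : ∀ a, X a = 0 := fun a => Nat.le_zero.mp (hcon a)
      simp [this] at hN
    obtain ⟨a, ha⟩ := hex
    set X' : α → ℕ := fun b => X b - (if b = a then 1 else 0) with hX'
    have hXeq : ∀ b, X b = X' b + (if b = a then 1 else 0) := by
      intro b
      by_cases hb : b = a <;> simp [hX', hb] <;> omega
    have hsum' : ∑ b, X' b = N := by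
      have h1 : ∑ b, X b = (∑ b, X' b) + ∑ b, (if b = a then 1 else 0) := by
        rw [← Finset.sum_add_distrib]
        exact Finset.sum_congr rfl fun b _ => hXeq b
      have h2 : ∑ b, (if b = a then (1:ℕ) else 0) = 1 := by
        rw [Finset.sum_ite_eq' Finset.univ a (fun _ => (1:ℕ))]
        simp
      omega
    have hle' : ∀ b, X' b ≤ m := fun b => le_trans (Nat.sub_le _ _) (hle b)
    have hA' : ∀ A : Finset α, ∑ b ∈ A, X' b ≤ m * r A := by
      intro A
      refine le_trans (Finset.sum_le_sum fun b _ => ?_) (hA A)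
      simp [hX']
    obtain ⟨I, hGood, hcnt⟩ := ih X' hsum' hle' hA'
    have hlt : ∀ A : Finset α, a ∈ A → ∑ b ∈ A, cntF I b < m * r A := by
      intro A haA
      have h1 : ∑ b ∈ A, cntF I b = ∑ b ∈ A, X' b := Finset.sum_congr rfl fun b _ => hcnt b
      have h2 : ∑ b ∈ A, X b ≤ m * r A := hA A
      have h3 : ∑ b ∈ A, X b = (∑ b ∈ A, X' b) + ∑ b ∈ A, (if b = a then 1 else 0) := by
        rw [← Finset.sum_add_distrib]
        exact Finset.sum_congr rfl fun b _ => hXeq b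
      have h4 : ∑ b ∈ A, (if b = a then (1:ℕ) else 0) = 1 := by
        rw [Finset.sum_ite_eq' A a (fun _ => (1:ℕ))]
        simp [haA]
      omega
    obtain ⟨I', hGood', hcnt'⟩ := augment_lemma hr hGood hlt
    refine ⟨I', hGood', fun b => ?_⟩
    rw [hcnt' b, hcnt b, ← hXeq b]

end PT

section Assembly
variable {n k m : ℕ} {M : PaperMatroid (Fin n)} {r : Finset (Fin n) → ℕ}

theorem sum_one_eq_indSys {last : Fin n → ℕ} (h : ∑ j, last j = 1) :
    ∃ j, last = indSys j := by
  classical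
  have hex : ∃ j, last j ≠ 0 := by
    by_contra hcon
    push_neg at hcon
    simp [hcon] at h
  obtain ⟨j, hj⟩ := hex
  have hsplit := Finset.sum_erase_add Finset.univ last (Finset.mem_univ j)
  have hrest : ∑ i ∈ Finset.univ.erase j, last i = 0 := by omega
  have hlastj : last j = 1 := by omega
  refine ⟨j, funext fun i => ?_⟩
  by_cases hij : i = j
  · subst hij; simp [indSys, hlastj]
  · have : last i = 0 :=
      (Finset.sum_eq_zero_iff.mp hrest) i (Finset.mem_erase.mpr ⟨hij, Finset.mem_univ i⟩)
    simp [indSys, hij, this]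

theorem indicator_card (I : Finset (Fin n)) :
    ∑ b, (if b ∈ I then (1:ℕ) else 0) = I.card := by
  rw [Finset.sum_ite_mem, Finset.univ_inter, Finset.card_eq_sum_ones]

theorem strong_decomp_iff (M : PaperMatroid (Fin n)) (k m : ℕ) (T last : Fin n → ℕ) :
    StrongDecompWith M k m T last ↔ ∃ I : Fin m → Finset (Fin n),
      (∀ p, M.Indep (I p) ∧ (I p).card = k) ∧ ∀ b, T b = cntF I b + last b := by
  classical
  constructor
  · rintro ⟨B, hB, hsum⟩
    refine ⟨fun p => suppSys (B p), fun p => ?_, fun b => ?_⟩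
    · obtain ⟨h1, h2, h3⟩ := hB p
      refine ⟨h1, ?_⟩
      have hrepr : ∀ b, B p b = if b ∈ suppSys (B p) then 1 else 0 := by
        intro b
        by_cases hb : B p b = 0 <;> simp [suppSys, hb]
        · have := h2 b; omega
      calc (suppSys (B p)).card = ∑ b, (if b ∈ suppSys (B p) then (1:ℕ) else 0) :=
            (indicator_card _).symm
        _ = ∑ b, B p b := Finset.sum_congr rfl fun b _ => (hrepr b).symm
        _ = k := h3
    · have : T b = (∑ i, B i) b + last b := by rw [hsum]; rfl
      rw [this]
      have h4 : (∑ i, B i) b = ∑ i, B i b := by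
        rw [Finset.sum_apply]
      rw [h4]
      congr 1
      refine Finset.sum_congr rfl fun p _ => ?_
      obtain ⟨h1, h2, h3⟩ := hB p
      by_cases hb : B p b = 0 <;> simp [cntF, suppSys, hb]
      · have := h2 b; omega
  · rintro ⟨I, hI, hT⟩
    refine ⟨fun p => fun b => if b ∈ I p then 1 else 0, fun p => ?_, ?_⟩
    · have hsupp : suppSys (fun b => if b ∈ I p then (1:ℕ) else 0) = I p := by
        ext b; by_cases hb : b ∈ I p <;> simp [suppSys, hb]
      refine ⟨by rw [hsupp]; exact (hI p).1, fun b => by by_cases hb : b ∈ I p <;> simp [hb], ?_⟩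
      rw [indicator_card]
      exact (hI p).2
    · funext b
      have h4 : (∑ i : Fin m, fun b => if b ∈ I i then (1:ℕ) else 0) b
          = ∑ i, (if b ∈ I i then (1:ℕ) else 0) := by
        rw [Finset.sum_apply]
      show T b = _
      rw [Pi.add_apply, h4, hT b]
      rfl

theorem sum_indSys (A : Finset (Fin n)) (x : Fin n) :
    ∑ b ∈ A, indSys x b = if x ∈ A then 1 else 0 := by
  unfold indSys
  rw [Finset.sum_ite_eq' A x (fun _ => (1:ℕ))]

variable (hr : ∀ A I, M.MaxIndepIn A I → I.card = r A)
include hr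

theorem sum_cnt_le (I : Fin m → Finset (Fin n)) (hGood : ∀ p, M.Indep (I p))
    (A : Finset (Fin n)) : ∑ b ∈ A, cntF I b ≤ m * r A := by
  rw [sum_cntF_eq A]
  calc ∑ p, ((I p) ∩ A).card ≤ ∑ _p : Fin m, r A := by
        refine Finset.sum_le_sum fun p _ => ?_
        exact card_le_r hr (M.subset_closed (hGood p) Finset.inter_subset_left)
          Finset.inter_subset_right
    _ = m * r A := by rw [Finset.sum_const, Finset.card_univ, Fintype.card_fin, smul_eq_mul]

theorem main_tight_lemma (hrank : r Finset.univ = k) (hm : 1 ≤ m)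
    (T : Fin n → ℕ) (I0 : Fin m → Finset (Fin n)) (j₀ : Fin n)
    (hI0 : ∀ p, M.Indep (I0 p) ∧ (I0 p).card = k)
    (hTr : ∀ b, T b = cntF I0 b + indSys j₀ b) :
    ∃ A₀ : Finset (Fin n), (∑ b ∈ A₀, T b = m * r A₀ + 1) ∧
      (∀ B, (∑ b ∈ B, T b = m * r B + 1) → A₀ ⊆ B) ∧
      (∀ x ∈ A₀, T x ≠ 0 → StrongDecompWith M k m T (indSys x)) := by
  classical
  have hGood0 : ∀ p, M.Indep (I0 p) := fun p => (hI0 p).1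
  have hsplitA : ∀ A : Finset (Fin n),
      ∑ b ∈ A, T b = (∑ b ∈ A, cntF I0 b) + (if j₀ ∈ A then 1 else 0) := by
    intro A
    rw [← sum_indSys A j₀, ← Finset.sum_add_distrib]
    exact Finset.sum_congr rfl fun b _ => hTr b
  have htb : ∀ A : Finset (Fin n), ∑ b ∈ A, T b ≤ m * r A + 1 := by
    intro A
    rw [hsplitA A]
    have := sum_cnt_le hr I0 hGood0 A
    by_cases hj : j₀ ∈ A <;> simp [hj] <;> omega
  have hTuniv : ∑ b, T b = m * k + 1 := by
    rw [hsplitA Finset.univ]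
    have h1 : ∑ b, cntF I0 b = ∑ p, (I0 p).card := by
      rw [sum_cntF_eq Finset.univ]
      exact Finset.sum_congr rfl fun p _ => by rw [Finset.inter_univ]
    have h2 : ∑ p, (I0 p).card = m * k := by
      rw [Finset.sum_congr rfl fun p _ => (hI0 p).2, Finset.sum_const, Finset.card_univ,
        Fintype.card_fin, smul_eq_mul]
    simp [h1, h2]
  -- tight sets
  set Tight : Finset (Fin n) → Prop := fun A => ∑ b ∈ A, T b = m * r A + 1 with hTight
  have huniv : Tight Finset.univ := by
    simp only [hTight]
    rw [hrank]
    exact hTuniv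
  have hinterTight : ∀ A B, Tight A → Tight B → Tight (A ∩ B) := by
    intro A B hA hB
    have h1 : (∑ b ∈ A ∪ B, T b) + (∑ b ∈ A ∩ B, T b) = (∑ b ∈ A, T b) + ∑ b ∈ B, T b :=
      Finset.sum_union_inter
    have h2 : r (A ∪ B) + r (A ∩ B) ≤ r A + r B := r_submod hr A B
    have h3 : ∑ b ∈ A ∪ B, T b ≤ m * r (A ∪ B) + 1 := htb _
    have h4 : ∑ b ∈ A ∩ B, T b ≤ m * r (A ∩ B) + 1 := htb _
    have h5 : m * (r (A ∪ B) + r (A ∩ B)) ≤ m * (r A + r B) := Nat.mul_le_mul_left m h2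
    simp only [hTight] at hA hB ⊢
    rw [Nat.mul_add, Nat.mul_add] at h5
    -- also need lower bounds on sums vs ranks:
    omega
  -- minimal tight set
  have hne : (Finset.univ.powerset.filter (fun A => Tight A)).Nonempty :=
    ⟨Finset.univ, Finset.mem_filter.mpr ⟨Finset.mem_powerset.mpr (Finset.subset_univ _), huniv⟩⟩
  obtain ⟨A₀, hA₀mem, hA₀min⟩ :=
    Finset.exists_min_image (Finset.univ.powerset.filter (fun A => Tight A)) Finset.card hne
  have hA₀t : Tight A₀ := (Finset.mem_filter.mp hA₀mem).2
  have hA₀sub : ∀ B, Tight B → A₀ ⊆ B := by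
    intro B hB
    have hAB : Tight (A₀ ∩ B) := hinterTight A₀ B hA₀t hB
    have hmemAB : A₀ ∩ B ∈ Finset.univ.powerset.filter (fun A => Tight A) :=
      Finset.mem_filter.mpr ⟨Finset.mem_powerset.mpr (Finset.subset_univ _), hAB⟩
    have hcardle := hA₀min _ hmemAB
    have := Finset.eq_of_subset_of_card_le Finset.inter_subset_left
      (le_trans hcardle (le_refl _))
    rw [← Finset.inter_eq_left]
    exact this
  refine ⟨A₀, hA₀t, hA₀sub, ?_⟩
  intro x hxA₀ hTx
  -- build the new decomposition via the partition theorem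
  set X : Fin n → ℕ := fun b => T b - indSys x b with hX
  have hXeq : ∀ b, T b = X b + indSys x b := by
    intro b
    by_cases hb : b = x <;> simp [hX, indSys, hb] <;> omega
  have hsingle : ∀ a : Fin n, T a = m + 1 → M.Indep {a} → Tight {a} := by
    intro a hTa hind
    simp only [hTight]
    have h1 : ∑ b ∈ ({a} : Finset (Fin n)), T b = T a := Finset.sum_singleton _ _
    have h2 : r {a} = 1 := by
      rw [r_indep hr hind, Finset.card_singleton]
    rw [h1, h2, hTa]; ring
  have hXle : ∀ a, X a ≤ m := by
    intro a
    have hcle : cntF I0 a ≤ m := by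
      unfold cntF
      calc ∑ p, (if a ∈ I0 p then (1:ℕ) else 0) ≤ ∑ _p : Fin m, 1 :=
            Finset.sum_le_sum fun p _ => by by_cases h : a ∈ I0 p <;> simp [h]
        _ = m := by simp [Finset.card_univ]
    have hTa : T a ≤ m + 1 := by
      rw [hTr a]
      have : indSys j₀ a ≤ 1 := by unfold indSys; by_cases h : a = j₀ <;> simp [h]
      omega
    by_cases hax : a = x
    · subst hax
      simp [hX, indSys]
      omega
    · -- if T a = m + 1 then {a} is tight, forcing x = a
      have : T a ≤ m := by
        by_contra hcon
        push_neg at hcon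
        have hTam : T a = m + 1 := by omega
        have hmem : ∃ p, a ∈ I0 p := by
          by_contra hcon2
          push_neg at hcon2
          have : cntF I0 a = 0 := by
            unfold cntF
            exact Finset.sum_eq_zero fun p _ => by simp [hcon2 p]
          rw [hTr a] at hTam
          have : indSys j₀ a ≤ 1 := by unfold indSys; by_cases h : a = j₀ <;> simp [h]
          omega
        obtain ⟨p, hp⟩ := hmem
        have hind : M.Indep {a} := M.subset_closed (hGood0 p) (by simpa using hp)
        have htight := hsingle a hTam hind
        have := hA₀sub {a} htight hxA₀
        simp at this
        exact hax this.symm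
      simp [hX, indSys, hax]
      omega
  have hXA : ∀ A : Finset (Fin n), ∑ a ∈ A, X a ≤ m * r A := by
    intro A
    have hsplit : (∑ b ∈ A, X b) + (if x ∈ A then 1 else 0) = ∑ b ∈ A, T b := by
      rw [← sum_indSys A x, ← Finset.sum_add_distrib]
      exact Finset.sum_congr rfl fun b _ => (hXeq b).symm
    by_cases hxA : x ∈ A
    · have := htb A
      rw [if_pos hxA] at hsplit
      omega
    · by_contra hcon
      push_neg at hcon
      have h1 : ∑ b ∈ A, T b = m * r A + 1 := by
        have := htb A
        rw [if_neg hxA] at hsplit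
        omega
      exact hxA (hA₀sub A h1 hxA₀)
  obtain ⟨I', hGood', hcnt'⟩ := partition_theorem hr X hXle hXA
  -- each I' p has k elements
  have hsumX : ∑ b, X b = m * k := by
    have hsplit : (∑ b, X b) + (if x ∈ (Finset.univ : Finset (Fin n)) then 1 else 0)
        = ∑ b, T b := by
      rw [← sum_indSys Finset.univ x, ← Finset.sum_add_distrib]
      exact Finset.sum_congr rfl fun b _ => (hXeq b).symm
    rw [if_pos (Finset.mem_univ x)] at hsplit
    omega
  have hcards : ∀ p, (I' p).card = k := by
    have hsum2 : ∑ p, (I' p).card = m * k := by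
      have h1 : ∑ b, cntF I' b = ∑ p, (I' p).card := by
        rw [sum_cntF_eq Finset.univ]
        exact Finset.sum_congr rfl fun p _ => by rw [Finset.inter_univ]
      have h2 : ∑ b, cntF I' b = ∑ b, X b := Finset.sum_congr rfl fun b _ => hcnt' b
      omega
    have hle2 : ∀ p, (I' p).card ≤ k := by
      intro p
      have := card_le_r hr (hGood' p) (Finset.subset_univ (I' p))
      rwa [hrank] at this
    intro p
    by_contra hcon
    have hlt2 : (I' p).card < k := by
      have := hle2 p
      omega
    have : ∑ q, (I' q).card < ∑ _q : Fin m, k := by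
      refine Finset.sum_lt_sum (fun q _ => hle2 q) ⟨p, Finset.mem_univ p, hlt2⟩
    rw [Finset.sum_const, Finset.card_univ, Fintype.card_fin, smul_eq_mul] at this
    omega
  rw [strong_decomp_iff]
  refine ⟨I', fun p => ⟨hGood' p, hcards p⟩, fun b => ?_⟩
  rw [hcnt' b, ← hXeq b]

end Assembly

/-- For two strong `(mk+1)`-systems `S` and `T`, at least one of the following holds. -/
theorem strong_system_alternative {n k m : ℕ} (hn : 0 < n) (hk : 0 < k) (hm : 1 ≤ m)
    (hnk : k ≤ n)
    (M : PaperMatroid (Fin n))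
    (r : Finset (Fin n) → ℕ)
    (hr : ∀ A I, M.MaxIndepIn A I → I.card = r A)
    (hrank : r Finset.univ = k)
    (S T : Fin n → ℕ)
    (hS : IsStrongSys M k m 1 S) (hT : IsStrongSys M k m 1 T) :
    (∃ i : Fin n, T i ≠ 0 ∧ S i < T i ∧ StrongDecompWith M k m T (indSys i)) ∨
    (∀ last : Fin n → ℕ, (∑ j, last j = 1) → StrongDecompWith M k m S last →
      StrongDecompWith M k m T last) := by
  classical
  by_cases halpha : ∃ i : Fin n, T i ≠ 0 ∧ S i < T i ∧ StrongDecompWith M k m T (indSys i)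
  · exact Or.inl halpha
  right
  intro last hlast hSd
  obtain ⟨j, rfl⟩ := sum_one_eq_indSys hlast
  obtain ⟨hTsum, last₀, hlast₀, hTd⟩ := hT
  obtain ⟨j₀, rfl⟩ := sum_one_eq_indSys hlast₀
  obtain ⟨I0, hI0, hTr⟩ := (strong_decomp_iff M k m T (indSys j₀)).mp hTd
  obtain ⟨A₀, hA₀t, hA₀sub, hdec⟩ := main_tight_lemma hr hrank hm T I0 j₀ hI0 hTr
  obtain ⟨IS, hIS, hSr⟩ := (strong_decomp_iff M k m S (indSys j)).mp hSd
  by_cases hj1 : j ∈ A₀ ∧ T j ≠ 0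
  · exact hdec j hj1.1 hj1.2
  exfalso
  have hSA : ∀ A : Finset (Fin n),
      ∑ b ∈ A, S b = (∑ b ∈ A, cntF IS b) + (if j ∈ A then 1 else 0) := by
    intro A
    rw [← sum_indSys A j, ← Finset.sum_add_distrib]
    exact Finset.sum_congr rfl fun b _ => hSr b
  have hScnt := sum_cnt_le hr IS (fun p => (hIS p).1) A₀
  have hex : ∃ i ∈ A₀, i ≠ j ∧ S i < T i := by
    by_contra hcon
    push_neg at hcon
    by_cases hjA : j ∈ A₀
    · have hTj : T j = 0 := by tauto
      have h1 : (∑ b ∈ A₀.erase j, T b) + T j = ∑ b ∈ A₀, T b := Finset.sum_erase_add A₀ T hjA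
      have h2 : (∑ b ∈ A₀.erase j, S b) + S j = ∑ b ∈ A₀, S b := Finset.sum_erase_add A₀ S hjA
      have h3 : ∑ b ∈ A₀.erase j, T b ≤ ∑ b ∈ A₀.erase j, S b := by
        refine Finset.sum_le_sum fun i hi => ?_
        obtain ⟨hij, hiA⟩ := Finset.mem_erase.mp hi
        exact hcon i hiA hij
      have hSj : 1 ≤ S j := by
        have := hSr j
        simp [indSys] at this
        omega
      have h4 := hSA A₀
      rw [if_pos hjA] at h4
      omega
    · have h3 : ∑ b ∈ A₀, T b ≤ ∑ b ∈ A₀, S b := by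
        refine Finset.sum_le_sum fun i hi => ?_
        exact hcon i hi (fun h => hjA (h ▸ hi))
      have h4 := hSA A₀
      rw [if_neg hjA] at h4
      omega
  obtain ⟨i, hiA, hij, hSi⟩ := hex
  exact halpha ⟨i, by omega, hSi, hdec i hiA (by omega)⟩
end
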